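/- arXiv:1905.03446 — 11 statements merged into one kernel-verified Lean document; each statement's English description precedes it below -/
import Mathlib

section
/- For every x ∈ F_0 we have Σ_{y ∈ F_k : y_0 = x} ∏_{i=0}^{k−1} ( b̲(i) / b(y_i) ) = ∏_{i=0}^{k−1} b̲(i), where the sum is over all y ∈ F_k whose prefix chain ends at x. Consequently, if F is chosen uniformly at random from F_k and procedure Relax outputs the bottom prefix y_0 of F with probability ∏_{i=0}^{k−1} b̲(i)/b(y_i) (rejecting otherwise), then every x ∈ F_0 is output with the same probability ( ∏_{i=0}^{k−1} b̲(i) ) / |F_k|; that is, conditional on no rejection the output is uniformly distributed over F_0. -/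
open Finset

/-- **Uniformity of procedure `Relax` (incremental relaxation).**
Setup: nonempty finite sets `F 0, …, F k` (`k ≥ 1`) with surjective prefix maps
`p i : F (i+1) → F i` for `i < k`; `b i x = |p i ⁻¹ (x)|`; prefix chains
`c i : F k → F i` with `c k = id` and `c i = p i ∘ c (i+1)`; real numbers
`bl i` with `0 < bl i ≤ b i x` for all `x ∈ F i`, `i < k`.
Then for every `x ∈ F 0`,
`Σ_{y ∈ F k : c 0 y = x} Π_{i<k} (bl i / b i (c i y)) = Π_{i<k} bl i`,
and consequently, choosing `F` uniformly from `F k` and outputting `c 0 F`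
with probability `Π_{i<k} bl i / b i (c i F)` (rejecting otherwise), every
`x ∈ F 0` is output with the same probability `(Π_{i<k} bl i) / |F k|`, i.e.
conditional on no rejection the output is uniform over `F 0`. -/
theorem relax_uniform (k : ℕ) (hk : 1 ≤ k)
    (F : ℕ → Type*) [∀ i, Fintype (F i)] [DecidableEq (F 0)]
    (hne : ∀ i, i ≤ k → Nonempty (F i))
    (p : ∀ i, F (i + 1) → F i)
    (hsurj : ∀ i, i < k → Function.Surjective (p i))
    (c : ∀ i, F k → F i)
    (hck : ∀ y : F k, c k y = y)
    (hc : ∀ i, i < k → ∀ y : F k, c i y = p i (c (i + 1) y))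
    (b : ∀ i, F i → ℕ)
    (hb : ∀ i, ∀ x : F i, b i x = Set.ncard {z : F (i + 1) | p i z = x})
    (bl : ℕ → ℝ)
    (hbl0 : ∀ i, i < k → 0 < bl i)
    (hble : ∀ i, i < k → ∀ x : F i, bl i ≤ (b i x : ℝ)) :
    ∀ x : F 0,
      (∑ y ∈ Finset.univ.filter (fun y : F k => c 0 y = x),
          ∏ i ∈ Finset.range k, (bl i / (b i (c i y) : ℝ)))
        = ∏ i ∈ Finset.range k, bl i
      ∧
      (∑ y ∈ Finset.univ.filter (fun y : F k => c 0 y = x),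
          (1 / (Fintype.card (F k) : ℝ)) *
            ∏ i ∈ Finset.range k, (bl i / (b i (c i y) : ℝ)))
        = (∏ i ∈ Finset.range k, bl i) / (Fintype.card (F k) : ℝ) := by
  classical
  have key : ∀ d j, j ≤ k → k - j = d → ∀ x : F j,
      (∑ y ∈ Finset.univ.filter (fun y : F k => c j y = x),
        ∏ i ∈ Finset.Ico j k, (bl i / (b i (c i y) : ℝ)))
      = ∏ i ∈ Finset.Ico j k, bl i := by
    intro d
    induction d with
    | zero =>
      intro j hj hd x
      have hjk : j = k := by omega
      subst hjk
      have hfil : (Finset.univ.filter (fun y : F j => c j y = x)) = {x} := by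
        ext y; simp [hck]
      simp [hfil]
    | succ d ih =>
      intro j hj hd x
      have hjk : j < k := by omega
      have hbx : (b j x : ℝ) ≠ 0 := by
        have := lt_of_lt_of_le (hbl0 j hjk) (hble j hjk x)
        positivity
      have hsplit :
          (∑ y ∈ Finset.univ.filter (fun y : F k => c j y = x),
            ∏ i ∈ Finset.Ico j k, (bl i / (b i (c i y) : ℝ)))
          = ∑ z ∈ Finset.univ.filter (fun z : F (j+1) => p j z = x),
              ∑ y ∈ Finset.univ.filter (fun y : F k => c (j+1) y = z),
                ∏ i ∈ Finset.Ico j k, (bl i / (b i (c i y) : ℝ)) := by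
        rw [← Finset.sum_fiberwise_of_maps_to
          (g := fun y : F k => c (j+1) y)
          (t := Finset.univ.filter (fun z : F (j+1) => p j z = x))
          (fun y hy => by
            simp only [Finset.mem_filter, Finset.mem_univ, true_and] at hy ⊢
            rw [← hc j hjk y]; exact hy)]
        refine Finset.sum_congr rfl fun z hz => ?_
        simp only [Finset.mem_filter, Finset.mem_univ, true_and] at hz
        congr 1
        ext y
        simp only [Finset.mem_filter, Finset.mem_univ, true_and, and_iff_right_iff_imp]
        intro hy
        rw [hc j hjk y, hy, hz]
      rw [hsplit]
      have hterm : ∀ z ∈ Finset.univ.filter (fun z : F (j+1) => p j z = x),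
          (∑ y ∈ Finset.univ.filter (fun y : F k => c (j+1) y = z),
            ∏ i ∈ Finset.Ico j k, (bl i / (b i (c i y) : ℝ)))
          = (bl j / (b j x : ℝ)) * ∏ i ∈ Finset.Ico (j+1) k, bl i := by
        intro z hz
        simp only [Finset.mem_filter, Finset.mem_univ, true_and] at hz
        have : (∑ y ∈ Finset.univ.filter (fun y : F k => c (j+1) y = z),
            ∏ i ∈ Finset.Ico j k, (bl i / (b i (c i y) : ℝ)))
            = ∑ y ∈ Finset.univ.filter (fun y : F k => c (j+1) y = z),
                (bl j / (b j x : ℝ)) *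
                  ∏ i ∈ Finset.Ico (j+1) k, (bl i / (b i (c i y) : ℝ)) := by
          refine Finset.sum_congr rfl fun y hy => ?_
          simp only [Finset.mem_filter, Finset.mem_univ, true_and] at hy
          rw [Finset.prod_eq_prod_Ico_succ_bot hjk]
          congr 2
          rw [hc j hjk y, hy, hz]
        rw [this, ← Finset.mul_sum, ih (j+1) (by omega) (by omega) z]
      rw [Finset.sum_congr rfl hterm, Finset.sum_const, nsmul_eq_mul]
      have hcard : ((Finset.univ.filter (fun z : F (j+1) => p j z = x)).card : ℝ)
          = (b j x : ℝ) := by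
        congr 1
        rw [hb j x, Set.ncard_eq_toFinset_card', Set.toFinset_setOf]
      rw [hcard, Finset.prod_eq_prod_Ico_succ_bot hjk]
      field_simp
  intro x
  have h1 := key k 0 (Nat.zero_le k) (by omega) x
  rw [Finset.range_eq_Ico]
  have hfeq : (@Finset.filter (F k) (fun y => c 0 y = x)
      (fun a => Classical.propDecidable _) Finset.univ)
      = Finset.univ.filter (fun y : F k => c 0 y = x) := by
    ext y; simp
  rw [hfeq] at h1
  constructor
  · exact h1
  · rw [← Finset.mul_sum, h1]
    ring
end

section
/- Let G ∈ 𝒢_{m1,m2} with m1 ≤ M_2/M and m2 ≤ M_2²/M². Let b_ℓ(G,∅) denote the number of simple ordered 2-paths (u,v,w) of G such that there is no loop at v. Then M_2·(1 − (8·m2·Δ + m1·Δ²)/M_2) ≤ b_ℓ(G,∅) ≤ M_2, i.e. M_2 − 8·m2·Δ − m1·Δ² ≤ b_ℓ(G,∅) ≤ M_2. -/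
/-!
A vertex `v` with `s` simple neighbours, `t` double neighbours and `ℓ` loops has degree
`d = s + 2t + 2ℓ`, and exactly `s(s-1)` simple 2-paths are centred at `v` when `ℓ = 0` (none
otherwise). Without a loop, `d(d-1) - s(s-1) = 2t(2s + 2t - 1) ≤ 4tΔ`; with a loop,
`d(d-1) ≤ Δ² ≤ ℓΔ²`. Summing over `v`, and using that the double neighbours of all vertices
count each double edge twice, gives the lower bound; the upper bound is `s ≤ d` at every vertex.
-/

open Finset

lemma Nat.add_two_mul_mul_pred_le (s t Δ : ℕ) (h : s + 2 * t ≤ Δ) :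
    (s + 2 * t) * (s + 2 * t - 1) ≤ s * (s - 1) + 4 * t * Δ := by
  rcases s with _ | s
  · simp only [zero_add, zero_mul]
    calc 2 * t * (2 * t - 1) ≤ 2 * t * Δ := by gcongr; omega
      _ ≤ 4 * t * Δ := by gcongr; omega
  · rw [show s + 1 + 2 * t - 1 = s + 2 * t by omega, Nat.add_sub_cancel]
    nlinarith

lemma Nat.mul_pred_le_mul_pred {a b : ℕ} (h : a ≤ b) : a * (a - 1) ≤ b * (b - 1) :=
  Nat.mul_le_mul h (Nat.sub_le_sub_right h 1)

namespace Multigraph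

variable {V : Type*} [Fintype V] [DecidableEq V] (mG : V → V → ℕ)

def simpleNeighbors (v : V) : Finset V := univ.filter fun u => u ≠ v ∧ mG v u = 1

def doubleNeighbors (v : V) : Finset V := univ.filter fun u => u ≠ v ∧ mG v u = 2

lemma sum_ne_eq_card_simpleNeighbors_add_two_mul (v : V) (hmul : ∀ u, u ≠ v → mG v u ≤ 2) :
    ∑ u ∈ univ.filter (· ≠ v), mG v u
      = #(simpleNeighbors mG v) + 2 * #(doubleNeighbors mG v) := by
  have split : ∀ u ∈ univ.filter (· ≠ v), mG v u
      = (if mG v u = 1 then 1 else 0) + 2 * (if mG v u = 2 then 1 else 0) := by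
    intro u hu
    have := hmul u (mem_filter.1 hu).2
    interval_cases mG v u <;> simp
  rw [sum_congr rfl split, sum_add_distrib, ← mul_sum, ← card_filter, ← card_filter,
    filter_filter, filter_filter, simpleNeighbors, doubleNeighbors]

lemma ncard_doublePairs_eq_sum :
    {q : V × V | q.1 ≠ q.2 ∧ mG q.1 q.2 = 2}.ncard = ∑ v, #(doubleNeighbors mG v) := by
  rw [Set.ncard_eq_toFinset_card', Set.toFinset_ofPred, card_filter, Fintype.sum_prod_type]
  simp only [doubleNeighbors, card_filter, ne_comm]

def loopFreeTwoPathsAt (v : V) : ℕ :=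
  if mG v v = 0 then #(simpleNeighbors mG v) * (#(simpleNeighbors mG v) - 1) else 0

lemma ncard_simpleTwoPaths_eq_sum (hsymm : ∀ u v, mG u v = mG v u) :
    {t : V × V × V | t.1 ≠ t.2.1 ∧ t.1 ≠ t.2.2 ∧ t.2.1 ≠ t.2.2 ∧
      mG t.1 t.2.1 = 1 ∧ mG t.2.1 t.2.2 = 1 ∧ mG t.2.1 t.2.1 = 0}.ncard
      = ∑ v, loopFreeTwoPathsAt mG v := by
  rw [Set.ncard_eq_toFinset_card', Set.toFinset_ofPred,
    card_eq_sum_card_fiberwise (f := fun t => t.2.1) (t := univ) fun _ _ => mem_univ _]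
  refine sum_congr rfl fun v _ => ?_
  have fiber : {t ∈ univ.filter fun t : V × V × V => t.1 ≠ t.2.1 ∧ t.1 ≠ t.2.2 ∧ t.2.1 ≠ t.2.2 ∧
        mG t.1 t.2.1 = 1 ∧ mG t.2.1 t.2.2 = 1 ∧ mG t.2.1 t.2.1 = 0 | t.2.1 = v}
      = if mG v v = 0 then (simpleNeighbors mG v).offDiag.image (fun p => (p.1, v, p.2))
        else ∅ := by
    ext ⟨a, b, c⟩
    split_ifs <;> simp [simpleNeighbors, hsymm a] <;> grind
  have insert_center : Function.Injective fun p : V × V => (p.1, v, p.2) :=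
    fun p q h => by simpa [Prod.ext_iff] using h
  rw [fiber, loopFreeTwoPathsAt]
  split_ifs <;> simp [card_image_of_injective _ insert_center, offDiag_card, Nat.mul_sub_one]

section Degree

variable {mG} {v : V} {d : ℕ}

lemma loopFreeTwoPathsAt_le
    (hd : d = #(simpleNeighbors mG v) + 2 * #(doubleNeighbors mG v) + 2 * mG v v) :
    loopFreeTwoPathsAt mG v ≤ d * (d - 1) := by
  unfold loopFreeTwoPathsAt
  split_ifs
  · exact Nat.mul_pred_le_mul_pred (by omega)
  · exact Nat.zero_le _

lemma mul_pred_le_loopFreeTwoPathsAt_add {Δ : ℕ}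
    (hd : d = #(simpleNeighbors mG v) + 2 * #(doubleNeighbors mG v) + 2 * mG v v)
    (hΔ : d ≤ Δ) :
    d * (d - 1) ≤ loopFreeTwoPathsAt mG v + 4 * #(doubleNeighbors mG v) * Δ + mG v v * Δ ^ 2 := by
  unfold loopFreeTwoPathsAt
  split_ifs with hloop
  · have hd' : d = #(simpleNeighbors mG v) + 2 * #(doubleNeighbors mG v) := by omega
    rw [hloop, zero_mul, add_zero, hd']
    exact Nat.add_two_mul_mul_pred_le _ _ Δ (hd' ▸ hΔ)
  · calc d * (d - 1) ≤ 1 * Δ ^ 2 := by rw [one_mul, sq]; exact Nat.mul_le_mul hΔ (by omega)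
      _ ≤ mG v v * Δ ^ 2 := by gcongr; omega
      _ ≤ _ := Nat.le_add_left _ _

end Degree

end Multigraph

open Multigraph in
theorem bl_empty_bounds_general (n : ℕ) (d : Fin n → ℕ) (mG : Fin n → Fin n → ℕ)
    (M2 Δ m1 m2 : ℕ)
    (hM2 : M2 = ∑ i, d i * (d i - 1))
    (hΔ : Δ = Finset.univ.sup d)
    (hsymm : ∀ u v, mG u v = mG v u)
    (hdeg : ∀ v, (∑ u ∈ Finset.univ.filter (fun u => u ≠ v), mG v u)
        + 2 * mG v v = d v)
    (hmul : ∀ u v, u ≠ v → mG u v ≤ 2)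
    (hm1 : m1 = ∑ v, mG v v)
    (hm2 : 2 * m2 = Set.ncard {q : Fin n × Fin n | q.1 ≠ q.2 ∧ mG q.1 q.2 = 2})
    (bl0 : ℕ)
    (hbl0 : bl0 = Set.ncard {t : Fin n × Fin n × Fin n |
      t.1 ≠ t.2.1 ∧ t.1 ≠ t.2.2 ∧ t.2.1 ≠ t.2.2 ∧
      mG t.1 t.2.1 = 1 ∧ mG t.2.1 t.2.2 = 1 ∧ mG t.2.1 t.2.1 = 0}) :
    (M2 : ℝ) - 8 * m2 * Δ - m1 * Δ ^ 2 ≤ (bl0 : ℝ) ∧ bl0 ≤ M2 := by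
  have hdΔ : ∀ v, d v ≤ Δ := fun v => hΔ ▸ le_sup (mem_univ v)
  have hd : ∀ v, d v = #(simpleNeighbors mG v) + 2 * #(doubleNeighbors mG v) + 2 * mG v v :=
    fun v => by
      rw [← hdeg, sum_ne_eq_card_simpleNeighbors_add_two_mul mG v fun u hu => hmul v u hu.symm]
  have hbl : bl0 = ∑ v, loopFreeTwoPathsAt mG v := hbl0 ▸ ncard_simpleTwoPaths_eq_sum mG hsymm
  rw [ncard_doublePairs_eq_sum] at hm2
  have lower : M2 ≤ bl0 + 8 * m2 * Δ + m1 * Δ ^ 2 := calc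
    M2 ≤ ∑ v, (loopFreeTwoPathsAt mG v + 4 * #(doubleNeighbors mG v) * Δ + mG v v * Δ ^ 2) :=
      hM2 ▸ sum_le_sum fun v _ => mul_pred_le_loopFreeTwoPathsAt_add (hd v) (hdΔ v)
    _ = bl0 + 8 * m2 * Δ + m1 * Δ ^ 2 := by
      rw [sum_add_distrib, sum_add_distrib, ← sum_mul, ← sum_mul, ← mul_sum, ← hm2, hbl, hm1]
      ring
  refine ⟨?_, hbl ▸ hM2 ▸ sum_le_sum fun v _ => loopFreeTwoPathsAt_le (hd v)⟩
  have : (M2 : ℝ) ≤ bl0 + 8 * m2 * Δ + m1 * Δ ^ 2 := by exact_mod_cast lower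
  linarith

/-- **Lower and upper bounds on `b_ℓ(G, ∅)`.**
`G ∈ 𝒢_{m1,m2}` is a multigraph (symmetric multiplicity function `mG`) with
degree sequence `d`, exactly `m1` loops and `m2` double edges, at most one
loop per vertex and multiplicities `≤ 2`, where `m1 ≤ M₂/M` and
`m2 ≤ M₂²/M²`.  `b_ℓ(G,∅)` is the number of simple ordered 2-paths `(u,v,w)`
of `G` with no loop at `v`.  Then
`M₂ − 8·m2·Δ − m1·Δ² ≤ b_ℓ(G,∅) ≤ M₂`. -/
theorem bl_empty_bounds (n : ℕ) (d : Fin n → ℕ) (mG : Fin n → Fin n → ℕ)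
    (M M2 Δ m1 m2 : ℕ)
    (hM : M = ∑ i, d i)
    (hM2 : M2 = ∑ i, d i * (d i - 1))
    (hΔ : Δ = Finset.univ.sup d)
    (hsymm : ∀ u v, mG u v = mG v u)
    (hdeg : ∀ v, (∑ u ∈ Finset.univ.filter (fun u => u ≠ v), mG v u)
        + 2 * mG v v = d v)
    (hloop : ∀ v, mG v v ≤ 1)
    (hmul : ∀ u v, u ≠ v → mG u v ≤ 2)
    (hm1 : m1 = ∑ v, mG v v)
    (hm2 : 2 * m2 = Set.ncard {q : Fin n × Fin n | q.1 ≠ q.2 ∧ mG q.1 q.2 = 2})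
    (hm1le : (m1 : ℝ) ≤ (M2 : ℝ) / M)
    (hm2le : (m2 : ℝ) ≤ (M2 : ℝ) ^ 2 / (M : ℝ) ^ 2)
    (bl0 : ℕ)
    (hbl0 : bl0 = Set.ncard {t : Fin n × Fin n × Fin n |
      t.1 ≠ t.2.1 ∧ t.1 ≠ t.2.2 ∧ t.2.1 ≠ t.2.2 ∧
      mG t.1 t.2.1 = 1 ∧ mG t.2.1 t.2.2 = 1 ∧ mG t.2.1 t.2.1 = 0}) :
    (M2 : ℝ) - 8 * m2 * Δ - m1 * Δ ^ 2 ≤ (bl0 : ℝ) ∧ bl0 ≤ M2 :=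
  bl_empty_bounds_general n d mG M2 Δ m1 m2 hM2 hΔ hsymm hdeg hmul hm1 hm2 bl0 hbl0
end

section
/- Let G ∈ 𝒢_{0,m2} (no loops) with m2 ≤ M_2²/M². Let b_d(G,∅) denote the number of simple ordered 2-paths of G. Then M_2·(1 − 8·m2·Δ/M_2) ≤ b_d(G,∅) ≤ M_2, i.e. M_2 − 8·m2·Δ ≤ b_d(G,∅) ≤ M_2. -/
open Finset

lemma aux_nn (n : ℕ) : n * (n - 1) + n = n * n := by
  cases n with
  | zero => rfl
  | succ k => simp [Nat.succ_sub_one, Nat.mul_succ, Nat.succ_mul]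

lemma aux_key (s t D : ℕ) (h : s + 2 * t ≤ D) :
    (s + 2 * t) * (s + 2 * t - 1) ≤ s * (s - 1) + 4 * t * D := by
  have h1 := aux_nn s
  have h2 := aux_nn (s + 2 * t)
  nlinarith [h1, h2, Nat.zero_le t]

/-- **Lower and upper bounds on `b_d(G, ∅)`.**
`G ∈ 𝒢_{0,m2}` is a loopless multigraph (symmetric multiplicity function `mG`)
with degree sequence `d`, exactly `m2` double edges and multiplicities `≤ 2`,
where `m2 ≤ M₂²/M²`.  `b_d(G,∅)` is the number of simple ordered 2-paths
`(u,v,w)` of `G`.  Then `M₂ − 8·m2·Δ ≤ b_d(G,∅) ≤ M₂`. -/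
theorem bd_empty_bounds (n : ℕ) (d : Fin n → ℕ) (mG : Fin n → Fin n → ℕ)
    (M M2 Δ m2 : ℕ)
    (hM : M = ∑ i, d i)
    (hM2 : M2 = ∑ i, d i * (d i - 1))
    (hΔ : Δ = Finset.univ.sup d)
    (hsymm : ∀ u v, mG u v = mG v u)
    (hdeg : ∀ v, (∑ u ∈ Finset.univ.filter (fun u => u ≠ v), mG v u)
        + 2 * mG v v = d v)
    (hloop : ∀ v, mG v v = 0)
    (hmul : ∀ u v, u ≠ v → mG u v ≤ 2)
    (hm2 : 2 * m2 = Set.ncard {q : Fin n × Fin n | q.1 ≠ q.2 ∧ mG q.1 q.2 = 2})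
    (hm2le : (m2 : ℝ) ≤ (M2 : ℝ) ^ 2 / (M : ℝ) ^ 2)
    (bd0 : ℕ)
    (hbd0 : bd0 = Set.ncard {t : Fin n × Fin n × Fin n |
      t.1 ≠ t.2.1 ∧ t.1 ≠ t.2.2 ∧ t.2.1 ≠ t.2.2 ∧
      mG t.1 t.2.1 = 1 ∧ mG t.2.1 t.2.2 = 1}) :
    (M2 : ℝ) - 8 * m2 * Δ ≤ (bd0 : ℝ) ∧ bd0 ≤ M2 := by
  classical
  -- degree decomposition
  have hd : ∀ v, d v = (univ.filter (fun u => mG v u = 1)).card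
      + 2 * (univ.filter (fun u => mG v u = 2)).card := by
    intro v
    rw [← hdeg v, hloop v, mul_zero, add_zero]
    have h1 : ∑ u ∈ univ.filter (fun u => u ≠ v), mG v u = ∑ u, mG v u := by
      apply Finset.sum_filter_of_ne
      intro u _ hne h
      subst h
      exact hne (hloop u)
    rw [h1]
    have h2 : ∀ u ∈ (univ : Finset (Fin n)), mG v u =
        (if mG v u = 1 then 1 else 0) + 2 * (if mG v u = 2 then 1 else 0) := by
      intro u _
      by_cases h : u = v
      · subst h; simp [hloop]
      · have := hmul v u (fun e => h e.symm)
        interval_cases (mG v u) <;> simp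
    rw [Finset.sum_congr rfl h2, Finset.sum_add_distrib, ← Finset.mul_sum]
    simp only [Finset.card_filter]
  -- sum of double-degrees
  have htsum : 2 * m2 = ∑ v, (univ.filter (fun u => mG v u = 2)).card := by
    rw [hm2]
    have hset : {q : Fin n × Fin n | q.1 ≠ q.2 ∧ mG q.1 q.2 = 2}
        = ↑(univ.filter (fun q : Fin n × Fin n => mG q.1 q.2 = 2)) := by
      ext ⟨u, v⟩
      simp only [Set.mem_setOf_eq, coe_filter, mem_univ, true_and]
      constructor
      · rintro ⟨-, h⟩; exact h
      · intro h
        refine ⟨?_, h⟩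
        rintro rfl
        rw [hloop] at h; omega
    rw [hset, Set.ncard_coe_finset, Finset.card_filter, Fintype.sum_prod_type]
    simp only [Finset.card_filter]
  -- bd0 as a sum of s_v (s_v - 1)
  have hbd : bd0 = ∑ v, ((univ.filter (fun u => mG v u = 1)).card
      * ((univ.filter (fun u => mG v u = 1)).card - 1)) := by
    rw [hbd0]
    have hset : {t : Fin n × Fin n × Fin n |
        t.1 ≠ t.2.1 ∧ t.1 ≠ t.2.2 ∧ t.2.1 ≠ t.2.2 ∧
        mG t.1 t.2.1 = 1 ∧ mG t.2.1 t.2.2 = 1}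
        = ↑(univ.filter (fun t : Fin n × Fin n × Fin n =>
            t.1 ≠ t.2.2 ∧ mG t.1 t.2.1 = 1 ∧ mG t.2.1 t.2.2 = 1)) := by
      ext ⟨u, v, w⟩
      simp only [Set.mem_setOf_eq, coe_filter, mem_univ, true_and]
      constructor
      · rintro ⟨_, h2, _, h4, h5⟩; exact ⟨h2, h4, h5⟩
      · rintro ⟨h2, h4, h5⟩
        refine ⟨?_, h2, ?_, h4, h5⟩ <;> rintro rfl
        · rw [hloop] at h4; omega
        · rw [hloop] at h5; omega
    rw [hset, Set.ncard_coe_finset, Finset.card_filter, Fintype.sum_prod_type]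
    simp only [Fintype.sum_prod_type]
    rw [Finset.sum_comm]
    refine Finset.sum_congr rfl (fun v _ => ?_)
    have hoff : ((univ : Finset (Fin n)).filter (fun u => mG v u = 1)).offDiag
        = (univ : Finset (Fin n × Fin n)).filter
            (fun p => p.1 ≠ p.2 ∧ mG p.1 v = 1 ∧ mG v p.2 = 1) := by
      ext ⟨u, w⟩
      simp only [Finset.mem_offDiag, Finset.mem_filter, mem_univ, true_and, hsymm u v]
      tauto
    have hc : (∑ u, ∑ w, if u ≠ w ∧ mG u v = 1 ∧ mG v w = 1 then 1 else 0)
        = ((univ : Finset (Fin n)).filter (fun u => mG v u = 1)).offDiag.card := by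
      rw [hoff, Finset.card_filter, Fintype.sum_prod_type]
    rw [hc, Finset.offDiag_card]
    have haux : ∀ a : ℕ, a * (a - 1) = a * a - a := fun a => by
      have := aux_nn a; omega
    rw [haux]
  -- upper bound
  have hupper : bd0 ≤ M2 := by
    rw [hbd, hM2]
    apply Finset.sum_le_sum
    intro v _
    have hs : (univ.filter (fun u => mG v u = 1)).card ≤ d v := by
      rw [hd v]; omega
    exact Nat.mul_le_mul hs (Nat.sub_le_sub_right hs 1)
  -- lower bound (in ℕ)
  have hlower : M2 ≤ bd0 + 8 * m2 * Δ := by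
    have key : ∀ v, d v * (d v - 1) ≤
        (univ.filter (fun u => mG v u = 1)).card
          * ((univ.filter (fun u => mG v u = 1)).card - 1)
        + 4 * (univ.filter (fun u => mG v u = 2)).card * Δ := by
      intro v
      have hDv : d v ≤ Δ := hΔ ▸ Finset.le_sup (Finset.mem_univ v)
      have := aux_key (univ.filter (fun u => mG v u = 1)).card
        (univ.filter (fun u => mG v u = 2)).card Δ (by rw [← hd v]; exact hDv)
      rw [← hd v] at this
      exact this
    calc M2 = ∑ v, d v * (d v - 1) := hM2
      _ ≤ ∑ v, ((univ.filter (fun u => mG v u = 1)).card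
            * ((univ.filter (fun u => mG v u = 1)).card - 1)
          + 4 * (univ.filter (fun u => mG v u = 2)).card * Δ) :=
        Finset.sum_le_sum (fun v _ => key v)
      _ = bd0 + 8 * m2 * Δ := by
        rw [Finset.sum_add_distrib, ← hbd]
        congr 1
        have : ∑ v, 4 * (univ.filter (fun u => mG v u = 2)).card * Δ
            = 4 * (∑ v, (univ.filter (fun u => mG v u = 2)).card) * Δ := by
          rw [Finset.mul_sum, Finset.sum_mul]
        rw [this, ← htsum]
        ring
  refine ⟨?_, hupper⟩
  have := hlower
  push_cast
  have h' : (M2 : ℝ) ≤ (bd0 : ℝ) + 8 * m2 * Δ := by exact_mod_cast hlower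
  linarith
end

section
/- Let G ∈ 𝒢_{m1,m2} with m1 ≤ M_2/M and m2 ≤ M_2²/M². For a simple ordered 2-path (v1,v2,v3) of G, let b_ℓ(G,(v1,v2,v3)) denote the number of ordered pairs (u,w) of vertices such that uw is a simple edge, u,w ∉ {v1,v2,v3}, and v1u and v3w are non-edges. Then for every simple ordered 2-path (v1,v2,v3) of G, M·(1 − (6Δ² − 4Δ)/M) ≤ b_ℓ(G,(v1,v2,v3)) ≤ M, i.e. M − 6Δ² + 4Δ ≤ b_ℓ(G,(v1,v2,v3)) ≤ M. -/
open Finset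

set_option maxHeartbeats 1600000 in
/-- **Bounds on `b_ℓ(G, (v1,v2,v3))`.**
`G ∈ 𝒢_{m1,m2}` with `m1 ≤ M₂/M` and `m2 ≤ M₂²/M²`.  For a simple ordered
2-path `(v1,v2,v3)` of `G`, `b_ℓ(G,(v1,v2,v3))` is the number of ordered
pairs `(u,w)` with `uw` a simple edge, `u, w ∉ {v1,v2,v3}`, and `v1u`, `v3w`
non-edges.  Then `M − 6Δ² + 4Δ ≤ b_ℓ(G,(v1,v2,v3)) ≤ M`. -/
theorem bl_path_bounds (n : ℕ) (d : Fin n → ℕ) (mG : Fin n → Fin n → ℕ)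
    (M M2 Δ m1 m2 : ℕ)
    (hM : M = ∑ i, d i)
    (hM2 : M2 = ∑ i, d i * (d i - 1))
    (hΔ : Δ = Finset.univ.sup d)
    (hsymm : ∀ u v, mG u v = mG v u)
    (hdeg : ∀ v, (∑ u ∈ Finset.univ.filter (fun u => u ≠ v), mG v u)
        + 2 * mG v v = d v)
    (hloop : ∀ v, mG v v ≤ 1)
    (hmul : ∀ u v, u ≠ v → mG u v ≤ 2)
    (hm1 : m1 = ∑ v, mG v v)
    (hm2 : 2 * m2 = Set.ncard {q : Fin n × Fin n | q.1 ≠ q.2 ∧ mG q.1 q.2 = 2})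
    (hm1le : (m1 : ℝ) ≤ (M2 : ℝ) / M)
    (hm2le : (m2 : ℝ) ≤ (M2 : ℝ) ^ 2 / (M : ℝ) ^ 2)
    (v1 v2 v3 : Fin n)
    (hdist : v1 ≠ v2 ∧ v1 ≠ v3 ∧ v2 ≠ v3)
    (hpath : mG v1 v2 = 1 ∧ mG v2 v3 = 1)
    (bl1 : ℕ)
    (hbl1 : bl1 = Set.ncard {q : Fin n × Fin n |
      q.1 ≠ q.2 ∧ mG q.1 q.2 = 1 ∧
      q.1 ≠ v1 ∧ q.1 ≠ v2 ∧ q.1 ≠ v3 ∧ q.2 ≠ v1 ∧ q.2 ≠ v2 ∧ q.2 ≠ v3 ∧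
      mG v1 q.1 = 0 ∧ mG v3 q.2 = 0}) :
    (M : ℝ) - 6 * Δ ^ 2 + 4 * Δ ≤ (bl1 : ℝ) ∧ bl1 ≤ M := by
  obtain ⟨h12, h13, h23⟩ := hdist
  obtain ⟨e12, e23⟩ := hpath
  -- basic degree facts
  have hdΔ : ∀ v, d v ≤ Δ := by
    intro v
    rw [hΔ]
    exact Finset.le_sup (mem_univ v)
  have hsum_le : ∀ v, (∑ u ∈ univ.filter (fun u => u ≠ v), mG v u) ≤ d v := by
    intro v
    have := hdeg v
    omega
  -- simple-degree bound
  have hsd : ∀ u : Fin n,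
      (univ.filter (fun w => w ≠ u ∧ mG u w = 1)).card ≤ d u := by
    intro u
    calc (univ.filter (fun w => w ≠ u ∧ mG u w = 1)).card
        = ∑ w ∈ univ.filter (fun w => w ≠ u ∧ mG u w = 1), mG u w := by
          rw [Finset.card_eq_sum_ones]
          refine Finset.sum_congr rfl ?_
          intro w hw
          simp only [mem_filter, mem_univ, true_and] at hw
          omega
      _ ≤ ∑ w ∈ univ.filter (fun w => w ≠ u), mG u w := by
          apply Finset.sum_le_sum_of_subset
          intro w hw
          simp only [mem_filter, mem_univ, true_and] at hw ⊢
          exact hw.1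
      _ ≤ d u := hsum_le u
  -- neighbourhood-size bound
  have hNb : ∀ x : Fin n,
      (univ.filter (fun u => 1 ≤ mG x u ∨ u = x)).card ≤ Δ + 1 := by
    intro x
    have hsub : univ.filter (fun u => 1 ≤ mG x u ∨ u = x)
        ⊆ insert x (univ.filter (fun u => u ≠ x ∧ 1 ≤ mG x u)) := by
      intro u hu
      simp only [mem_filter, mem_univ, true_and, mem_insert] at hu ⊢
      by_cases h : u = x
      · exact Or.inl h
      · exact Or.inr ⟨h, by tauto⟩
    have hcard : (univ.filter (fun u => u ≠ x ∧ 1 ≤ mG x u)).card ≤ d x := by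
      calc (univ.filter (fun u => u ≠ x ∧ 1 ≤ mG x u)).card
          = ∑ u ∈ univ.filter (fun u => u ≠ x ∧ 1 ≤ mG x u), 1 := by
            rw [Finset.card_eq_sum_ones]
        _ ≤ ∑ u ∈ univ.filter (fun u => u ≠ x ∧ 1 ≤ mG x u), mG x u := by
            apply Finset.sum_le_sum
            intro u hu
            simp only [mem_filter, mem_univ, true_and] at hu
            omega
        _ ≤ ∑ u ∈ univ.filter (fun u => u ≠ x), mG x u := by
            apply Finset.sum_le_sum_of_subset
            intro u hu
            simp only [mem_filter, mem_univ, true_and] at hu ⊢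
            exact hu.1
        _ ≤ d x := hsum_le x
    calc (univ.filter (fun u => 1 ≤ mG x u ∨ u = x)).card
        ≤ (insert x (univ.filter (fun u => u ≠ x ∧ 1 ≤ mG x u))).card :=
          card_le_card hsub
      _ ≤ (univ.filter (fun u => u ≠ x ∧ 1 ≤ mG x u)).card + 1 :=
          card_insert_le _ _
      _ ≤ Δ + 1 := by
          have := hdΔ x
          omega
  -- the main finsets
  set S : Finset (Fin n × Fin n) :=
    univ.filter (fun q => q.1 ≠ q.2 ∧ mG q.1 q.2 = 1) with hSdef
  set D : Finset (Fin n × Fin n) :=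
    univ.filter (fun q => q.1 ≠ q.2 ∧ mG q.1 q.2 = 2) with hDdef
  set Good : Finset (Fin n × Fin n) := univ.filter (fun q =>
    q.1 ≠ q.2 ∧ mG q.1 q.2 = 1 ∧ q.1 ≠ v1 ∧ q.1 ≠ v2 ∧ q.1 ≠ v3 ∧
    q.2 ≠ v1 ∧ q.2 ≠ v2 ∧ q.2 ≠ v3 ∧ mG v1 q.1 = 0 ∧ mG v3 q.2 = 0) with hGdef
  set L' : Finset (Fin n × Fin n) :=
    S.filter (fun q => 1 ≤ mG v1 q.1 ∨ q.1 = v1) with hLdef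
  set R' : Finset (Fin n × Fin n) :=
    S.filter (fun q => 1 ≤ mG v3 q.2 ∨ q.2 = v3) with hRdef
  -- bl1 = Good.card
  have hbl : bl1 = Good.card := by
    rw [hbl1, ← Set.ncard_coe_finset Good]
    congr 1
    ext q
    simp [hGdef]
  -- D.card = 2 * m2
  have hD2 : D.card = 2 * m2 := by
    rw [hm2, ← Set.ncard_coe_finset D]
    congr 1
    ext q
    simp [hDdef]
  -- counting identity M = S.card + 2*D.card + 2*m1
  have hMid : M = S.card + 2 * D.card + 2 * m1 := by
    have h1 : M = (∑ v, ∑ u ∈ univ.filter (fun u => u ≠ v), mG v u) + 2 * m1 := by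
      rw [hM, hm1, Finset.mul_sum, ← Finset.sum_add_distrib]
      exact Finset.sum_congr rfl (fun v _ => (hdeg v).symm)
    have h2 : (∑ v, ∑ u ∈ univ.filter (fun u => u ≠ v), mG v u)
        = ∑ q ∈ (univ : Finset (Fin n × Fin n)), if q.1 ≠ q.2 then mG q.1 q.2 else 0 := by
      rw [← Finset.univ_product_univ, Finset.sum_product]
      refine Finset.sum_congr rfl fun v _ => ?_
      rw [Finset.sum_filter]
      refine Finset.sum_congr rfl fun u _ => ?_
      by_cases h : u = v
      · simp [h]
      · simp [h, Ne.symm h]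
    have h3 : (∑ q ∈ (univ : Finset (Fin n × Fin n)), if q.1 ≠ q.2 then mG q.1 q.2 else 0)
        = (∑ q ∈ (univ : Finset (Fin n × Fin n)),
            if q.1 ≠ q.2 ∧ mG q.1 q.2 = 1 then 1 else 0)
          + 2 * (∑ q ∈ (univ : Finset (Fin n × Fin n)),
            if q.1 ≠ q.2 ∧ mG q.1 q.2 = 2 then 1 else 0) := by
      rw [Finset.mul_sum, ← Finset.sum_add_distrib]
      refine Finset.sum_congr rfl fun q _ => ?_
      by_cases hne : q.1 = q.2
      · simp [hne]
      · have := hmul q.1 q.2 hne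
        split_ifs <;> omega
    have h4 : S.card = ∑ q ∈ (univ : Finset (Fin n × Fin n)),
        if q.1 ≠ q.2 ∧ mG q.1 q.2 = 1 then 1 else 0 := by
      rw [hSdef, Finset.card_filter]
    have h5 : D.card = ∑ q ∈ (univ : Finset (Fin n × Fin n)),
        if q.1 ≠ q.2 ∧ mG q.1 q.2 = 2 then 1 else 0 := by
      rw [hDdef, Finset.card_filter]
    rw [h1, h2, h3, ← h4, ← h5]
  -- Good ⊆ S, upper bound
  have hGS : Good ⊆ S := by
    intro q hq
    simp only [hGdef, hSdef, mem_filter, mem_univ, true_and] at hq ⊢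
    tauto
  have hupper : bl1 ≤ M := by
    rw [hbl]
    have := card_le_card hGS
    omega
  -- L' and R' size bounds
  have hLcard : L'.card ≤ (Δ + 1) * Δ := by
    have hsub : L' ⊆ (univ.filter (fun u => 1 ≤ mG v1 u ∨ u = v1)).biUnion
        (fun u => ({u} : Finset (Fin n)) ×ˢ (univ.filter (fun w => w ≠ u ∧ mG u w = 1))) := by
      intro q hq
      simp only [hLdef, hSdef, mem_filter, mem_univ, true_and] at hq
      obtain ⟨⟨hne, hone⟩, hcond⟩ := hq
      rw [Finset.mem_biUnion]
      refine ⟨q.1, by simp [hcond], ?_⟩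
      rw [Finset.mem_product]
      constructor
      · simp
      · simp only [mem_filter, mem_univ, true_and]
        exact ⟨Ne.symm hne, hone⟩
    calc L'.card ≤ _ := card_le_card hsub
      _ ≤ ∑ u ∈ univ.filter (fun u => 1 ≤ mG v1 u ∨ u = v1),
            (({u} : Finset (Fin n)) ×ˢ (univ.filter (fun w => w ≠ u ∧ mG u w = 1))).card :=
          Finset.card_biUnion_le
      _ ≤ ∑ _u ∈ univ.filter (fun u => 1 ≤ mG v1 u ∨ u = v1), Δ := by
          apply Finset.sum_le_sum
          intro u _
          rw [Finset.card_product, Finset.card_singleton, one_mul]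
          exact le_trans (hsd u) (hdΔ u)
      _ = (univ.filter (fun u => 1 ≤ mG v1 u ∨ u = v1)).card * Δ := by
          rw [Finset.sum_const, smul_eq_mul]
      _ ≤ (Δ + 1) * Δ := Nat.mul_le_mul_right _ (hNb v1)
  have hRcard : R'.card ≤ (Δ + 1) * Δ := by
    have hsub : R' ⊆ (univ.filter (fun w => 1 ≤ mG v3 w ∨ w = v3)).biUnion
        (fun w => (univ.filter (fun u => u ≠ w ∧ mG w u = 1)) ×ˢ ({w} : Finset (Fin n))) := by
      intro q hq
      simp only [hRdef, hSdef, mem_filter, mem_univ, true_and] at hq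
      obtain ⟨⟨hne, hone⟩, hcond⟩ := hq
      rw [Finset.mem_biUnion]
      refine ⟨q.2, by simp [hcond], ?_⟩
      rw [Finset.mem_product]
      constructor
      · simp only [mem_filter, mem_univ, true_and]
        refine ⟨hne, ?_⟩
        rw [hsymm]
        exact hone
      · simp
    calc R'.card ≤ _ := card_le_card hsub
      _ ≤ ∑ w ∈ univ.filter (fun w => 1 ≤ mG v3 w ∨ w = v3),
            ((univ.filter (fun u => u ≠ w ∧ mG w u = 1)) ×ˢ ({w} : Finset (Fin n))).card :=
          Finset.card_biUnion_le
      _ ≤ ∑ _w ∈ univ.filter (fun w => 1 ≤ mG v3 w ∨ w = v3), Δ := by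
          apply Finset.sum_le_sum
          intro w _
          rw [Finset.card_product, Finset.card_singleton, mul_one]
          exact le_trans (hsd w) (hdΔ w)
      _ = (univ.filter (fun w => 1 ≤ mG v3 w ∨ w = v3)).card * Δ := by
          rw [Finset.sum_const, smul_eq_mul]
      _ ≤ (Δ + 1) * Δ := Nat.mul_le_mul_right _ (hNb v3)
  -- two elements in the intersection
  have hinter : 2 ≤ (L' ∩ R').card := by
    have hmem1 : ((v1, v2) : Fin n × Fin n) ∈ L' ∩ R' := by
      rw [Finset.mem_inter]
      constructor
      · simp only [hLdef, hSdef, mem_filter, mem_univ, true_and]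
        exact ⟨⟨h12, e12⟩, Or.inr trivial⟩
      · simp only [hRdef, hSdef, mem_filter, mem_univ, true_and]
        refine ⟨⟨h12, e12⟩, Or.inl ?_⟩
        rw [hsymm]
        omega
    have hmem2 : ((v2, v3) : Fin n × Fin n) ∈ L' ∩ R' := by
      rw [Finset.mem_inter]
      constructor
      · simp only [hLdef, hSdef, mem_filter, mem_univ, true_and]
        exact ⟨⟨h23, e23⟩, Or.inl (by omega)⟩
      · simp only [hRdef, hSdef, mem_filter, mem_univ, true_and]
        exact ⟨⟨h23, e23⟩, Or.inr trivial⟩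
    have hsub : ({(v1, v2), (v2, v3)} : Finset (Fin n × Fin n)) ⊆ L' ∩ R' := by
      intro q hq
      simp only [Finset.mem_insert, Finset.mem_singleton] at hq
      rcases hq with h | h <;> subst h
      · exact hmem1
      · exact hmem2
    have hcard2 : ({(v1, v2), (v2, v3)} : Finset (Fin n × Fin n)).card = 2 := by
      rw [Finset.card_insert_of_notMem, Finset.card_singleton]
      simp only [Finset.mem_singleton]
      intro h
      exact h12 (congrArg Prod.fst h)
    calc 2 = ({(v1, v2), (v2, v3)} : Finset (Fin n × Fin n)).card := hcard2.symm
      _ ≤ (L' ∩ R').card := card_le_card hsub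
  -- S is covered by Good, L', R'
  have hcover : S ⊆ Good ∪ (L' ∪ R') := by
    intro q hq
    rw [Finset.mem_union, Finset.mem_union]
    by_cases hL : q ∈ L'
    · exact Or.inr (Or.inl hL)
    by_cases hR : q ∈ R'
    · exact Or.inr (Or.inr hR)
    left
    simp only [hLdef, mem_filter, hq, true_and, not_or] at hL
    simp only [hRdef, mem_filter, hq, true_and, not_or] at hR
    obtain ⟨hL1, hL2⟩ := hL
    obtain ⟨hR1, hR2⟩ := hR
    have hL0 : mG v1 q.1 = 0 := by omega
    have hR0 : mG v3 q.2 = 0 := by omega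
    simp only [hSdef, mem_filter, mem_univ, true_and] at hq
    obtain ⟨hne, hone⟩ := hq
    simp only [hGdef, mem_filter, mem_univ, true_and]
    refine ⟨hne, hone, hL2, ?_, ?_, ?_, ?_, hR2, hL0, hR0⟩
    · intro h
      rw [h] at hL0
      omega
    · intro h
      rw [h] at hone
      omega
    · intro h
      have : mG v1 q.1 = 1 := by
        rw [hsymm, ← h]
        exact hone
      omega
    · intro h
      rw [h] at hR0
      have : mG v3 v2 = 1 := by rw [hsymm]; exact e23
      omega
  -- key counting inequality
  have hkey : S.card + 2 ≤ Good.card + L'.card + R'.card := by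
    have h1 : S.card ≤ Good.card + (L' ∪ R').card := by
      calc S.card ≤ (Good ∪ (L' ∪ R')).card := card_le_card hcover
        _ ≤ Good.card + (L' ∪ R').card := card_union_le _ _
    have h2 : (L' ∪ R').card + (L' ∩ R').card = L'.card + R'.card :=
      Finset.card_union_add_card_inter _ _
    omega
  -- Δ ≥ 2 and M ≥ 2
  have e21 : mG v2 v1 = 1 := by rw [hsymm]; exact e12
  have hd2 : 2 ≤ d v2 := by
    have hsub : ({v1, v3} : Finset (Fin n)) ⊆ univ.filter (fun u => u ≠ v2) := by
      intro u hu
      simp only [Finset.mem_insert, Finset.mem_singleton] at hu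
      simp only [mem_filter, mem_univ, true_and]
      rcases hu with h | h <;> subst h
      · exact h12
      · exact Ne.symm h23
    have hle : ∑ u ∈ ({v1, v3} : Finset (Fin n)), mG v2 u
        ≤ ∑ u ∈ univ.filter (fun u => u ≠ v2), mG v2 u :=
      Finset.sum_le_sum_of_subset hsub
    rw [Finset.sum_pair h13] at hle
    have := hsum_le v2
    omega
  have hΔ2 : 2 ≤ Δ := le_trans hd2 (hdΔ v2)
  have hM0 : 2 ≤ M := by
    rw [hM]
    exact le_trans hd2 (Finset.single_le_sum (fun i _ => Nat.zero_le _) (mem_univ v2))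
  have hMpos : (0 : ℝ) < M := by
    have : (2 : ℝ) ≤ M := by exact_mod_cast hM0
    linarith
  -- M2 ≤ M (Δ - 1)
  have hM2M : M2 + M ≤ M * Δ := by
    rw [hM2, hM, ← Finset.sum_add_distrib, Finset.sum_mul]
    apply Finset.sum_le_sum
    intro i _
    have h1 : d i * (d i - 1) + d i = d i * d i := by
      rcases Nat.eq_zero_or_pos (d i) with h | h
      · simp [h]
      · have h2 : d i - 1 + 1 = d i := Nat.succ_pred_eq_of_pos h
        calc d i * (d i - 1) + d i = d i * (d i - 1 + 1) := by ring
          _ = d i * d i := by rw [h2]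
    rw [h1]
    exact Nat.mul_le_mul_left _ (hdΔ i)
  have hM2R : (M2 : ℝ) ≤ (M : ℝ) * ((Δ : ℝ) - 1) := by
    have : ((M2 : ℕ) : ℝ) + M ≤ (M : ℝ) * Δ := by exact_mod_cast hM2M
    linarith
  have hm1R : (m1 : ℝ) ≤ (Δ : ℝ) - 1 := by
    have hdiv : (M2 : ℝ) / M ≤ (Δ : ℝ) - 1 := by
      rw [div_le_iff₀ hMpos]
      linarith
    linarith
  have hm2R : (m2 : ℝ) ≤ ((Δ : ℝ) - 1) ^ 2 := by
    have h0 : (0 : ℝ) ≤ (M2 : ℝ) := Nat.cast_nonneg _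
    have hdiv : (M2 : ℝ) ^ 2 / (M : ℝ) ^ 2 ≤ ((Δ : ℝ) - 1) ^ 2 := by
      rw [div_le_iff₀ (by positivity)]
      nlinarith [mul_self_le_mul_self h0 hM2R]
    linarith
  -- final assembly
  refine ⟨?_, hupper⟩
  have c1 : (S.card : ℝ) + 2 ≤ (Good.card : ℝ) + L'.card + R'.card := by
    exact_mod_cast hkey
  have c2 : (M : ℝ) = (S.card : ℝ) + 4 * m2 + 2 * m1 := by
    have : M = S.card + 2 * (2 * m2) + 2 * m1 := by rw [← hD2]; exact hMid
    rw [this]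
    push_cast
    ring
  have c3 : (L'.card : ℝ) ≤ ((Δ : ℝ) + 1) * Δ := by exact_mod_cast hLcard
  have c4 : (R'.card : ℝ) ≤ ((Δ : ℝ) + 1) * Δ := by exact_mod_cast hRcard
  have cbl : (bl1 : ℝ) = (Good.card : ℝ) := by exact_mod_cast hbl
  rw [cbl]
  nlinarith [hm1R, hm2R, c1, c2, c3, c4]
end

section
/- Let G ∈ 𝒢_{m1,m2} with m1 ≤ M_2/M and m2 ≤ M_2²/M². Let f_ℓ(G) denote the number of ordered 5-tuples (v1,v2,v3,v4,v5) of distinct vertices of G such that there is a loop at v2, v1v4 and v3v5 are simple edges, and v1v2, v2v3 and v4v5 are non-edges (the number of ℓ-switchings applicable to G). Then m1·M²·(1 − (11Δ² − 4Δ + 4)/M) ≤ f_ℓ(G) ≤ m1·M². -/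
/-!
An ℓ-switching is a triple (loop vertex `v2`, simple dart `v1v4`, simple dart `v3v5`) with
extra conditions, so `f_ℓ ≤ m1·|S|²` for the set `S` of simple darts, and the handshake lemma
gives `|S| = M − 2m1 − 4m2 ≤ M`.

Conversely a triple fails to be a switching only if some dart endpoint lies in a set of at
most `Δ + 3` vertices determined by the rest of the triple (`v2`, `v1`, `v4` and the
neighbourhoods of `v2` and `v4`). At most `Δ` darts start, or end, at a given vertex, so for
each loop at most `|S|(8Δ + 3Δ²)` triples fail. Finally `m1 ≤ M₂/M ≤ Δ − 1` and
`m2 ≤ (Δ − 1)²` control the loss in `|S|² ≥ M² − 2M(2m1 + 4m2)`.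
-/

open Finset

namespace Finset

variable {α β γ : Type*}

theorem card_filter_product_le_of_forall_left {s : Finset β} {t : Finset γ}
    {p : β × γ → Prop} [DecidablePred p] {k : ℕ} (h : ∀ b ∈ s, #{c ∈ t | p (b, c)} ≤ k) :
    #{x ∈ s ×ˢ t | p x} ≤ #s * k := by
  rw [card_filter, sum_product, ← smul_eq_mul, ← sum_const]
  exact sum_le_sum fun b hb => (card_filter _ _).symm.trans_le (h b hb)

theorem card_filter_apply_mem_le [DecidableEq β] {s : Finset α} (f : α → β) (t : Finset β)
    {k : ℕ} (h : ∀ b ∈ t, #{a ∈ s | f a = b} ≤ k) : #{a ∈ s | f a ∈ t} ≤ #t * k := by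
  rw [mul_comm]
  refine card_le_mul_card_image_of_maps_to (fun a ha => (mem_filter.1 ha).2) k
    fun b hb => (card_le_card ?_).trans (h b hb)
  exact filter_subset_filter _ (filter_subset _ _)

theorem sum_eq_card_filter_eq_one_add_two_mul {s : Finset α} {f : α → ℕ}
    (h : ∀ a ∈ s, f a ≤ 2) : ∑ a ∈ s, f a = #{a ∈ s | f a = 1} + 2 * #{a ∈ s | f a = 2} := by
  rw [card_filter, card_filter, mul_sum, ← sum_add_distrib]
  refine sum_congr rfl fun a ha => ?_
  have := h a ha
  split_ifs <;> omega

end Finset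

theorem cast_sum_mul_sub_one_le {ι : Type*} (s : Finset ι) (d : ι → ℕ) {Δ : ℕ}
    (h : ∀ i ∈ s, d i ≤ Δ) :
    ((∑ i ∈ s, d i * (d i - 1) : ℕ) : ℝ) ≤ (Δ - 1) * ((∑ i ∈ s, d i : ℕ) : ℝ) := by
  push_cast
  rw [mul_sum]
  refine sum_le_sum fun i hi => ?_
  have hdi : (d i : ℝ) ≤ Δ := by exact_mod_cast h i hi
  rcases Nat.eq_zero_or_pos (d i) with h0 | hpos
  · simp [h0]
  · rw [Nat.cast_sub hpos]
    push_cast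
    nlinarith [(Nat.cast_nonneg (d i) : (0 : ℝ) ≤ d i)]

theorem injective_vecCons_five {α : Type*} {a b c d e : α} (hab : a ≠ b) (hac : a ≠ c)
    (had : a ≠ d) (hae : a ≠ e) (hbc : b ≠ c) (hbd : b ≠ d) (hbe : b ≠ e) (hcd : c ≠ d)
    (hce : c ≠ e) (hde : d ≠ e) : Function.Injective ![a, b, c, d, e] := by
  simp only [Matrix.vecCons, Fin.cons_injective_iff]
  simp [*, Function.Injective, eq_iff_true_of_subsingleton]

namespace Multigraph

def lSwitchingEquiv (V : Type*) : V × (V × V) × (V × V) ≃ (Fin 5 → V) where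
  toFun x := ![x.2.1.1, x.1, x.2.2.1, x.2.1.2, x.2.2.2]
  invFun t := (t 1, (t 0, t 3), (t 2, t 4))
  left_inv := fun _ => rfl
  right_inv t := by ext i; fin_cases i <;> rfl

@[simp]
theorem lSwitchingEquiv_apply {V : Type*} (x : V × (V × V) × (V × V)) :
    lSwitchingEquiv V x = ![x.2.1.1, x.1, x.2.2.1, x.2.1.2, x.2.2.2] :=
  rfl

variable {V : Type*} [Fintype V] (m : V → V → ℕ)

def loopVertices : Finset V := univ.filter fun v => 1 ≤ m v v

def neighborFinset (w : V) : Finset V := univ.filter fun u => 1 ≤ m w u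

variable [DecidableEq V]

def degree (v : V) : ℕ := (∑ u ∈ univ.filter (fun u => u ≠ v), m v u) + 2 * m v v

def simpleDarts : Finset (V × V) := univ.filter fun q => q.1 ≠ q.2 ∧ m q.1 q.2 = 1

def doubleDarts : Finset (V × V) := univ.filter fun q => q.1 ≠ q.2 ∧ m q.1 q.2 = 2

def lSwitchings : Finset (Fin 5 → V) :=
  univ.filter fun t => Function.Injective t ∧ 1 ≤ m (t 1) (t 1) ∧
    m (t 0) (t 3) = 1 ∧ m (t 2) (t 4) = 1 ∧
    m (t 0) (t 1) = 0 ∧ m (t 1) (t 2) = 0 ∧ m (t 3) (t 4) = 0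

variable {m}

omit [DecidableEq V] in
theorem card_loopVertices (hloop : ∀ v, m v v ≤ 1) : #(loopVertices m) = ∑ v, m v v := by
  rw [loopVertices, card_filter]
  refine sum_congr rfl fun v _ => ?_
  have := hloop v
  split_ifs <;> omega

theorem card_simpleDarts_add_card_doubleDarts (hmul : ∀ u v, u ≠ v → m u v ≤ 2) :
    #(simpleDarts m) + 2 * #(doubleDarts m) + 2 * ∑ v, m v v = ∑ v, degree m v := by
  have hoff : ∑ v, ∑ u ∈ univ.filter (fun u => u ≠ v), m v u
      = ∑ q ∈ univ.filter (fun q : V × V => q.1 ≠ q.2), m q.1 q.2 := by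
    rw [sum_filter, ← univ_product_univ, sum_product]
    simp only [sum_filter, ne_comm]
  rw [simpleDarts, doubleDarts, ← filter_filter, ← filter_filter,
    ← sum_eq_card_filter_eq_one_add_two_mul fun q hq => hmul _ _ (mem_filter.1 hq).2,
    ← hoff, mul_sum, ← sum_add_distrib]
  rfl

theorem card_neighborFinset_le_degree (w : V) : #(neighborFinset m w) ≤ degree m w := by
  rw [neighborFinset, card_filter, degree, filter_ne', ← add_sum_erase _ _ (mem_univ w)]
  have hloop : (if 1 ≤ m w w then 1 else 0) ≤ 2 * m w w := by split_ifs <;> omega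
  have hrest : ∑ u ∈ univ.erase w, (if 1 ≤ m w u then 1 else 0) ≤ ∑ u ∈ univ.erase w, m w u :=
    sum_le_sum fun u _ => by split_ifs <;> omega
  omega

theorem card_neighborFinset_le {Δ : ℕ} (hΔ : ∀ v, degree m v ≤ Δ) (w : V) :
    #(neighborFinset m w) ≤ Δ :=
  (card_neighborFinset_le_degree w).trans (hΔ w)

theorem card_filter_simpleDarts_fst_eq_le (w : V) :
    #{e ∈ simpleDarts m | e.1 = w} ≤ degree m w := by
  refine (card_le_card_of_injOn Prod.snd (t := neighborFinset m w) ?_ ?_).trans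
    (card_neighborFinset_le_degree w)
  · intro e he
    simp only [simpleDarts, coe_filter, mem_filter, mem_univ, true_and, Set.mem_ofPred_eq] at he
    simp [neighborFinset, ← he.2, he.1.2]
  · intro e he e' he' h
    simp only [coe_filter, Set.mem_ofPred_eq] at he he'
    exact Prod.ext (he.2.trans he'.2.symm) h

theorem card_filter_simpleDarts_snd_eq_le (hsymm : ∀ u v, m u v = m v u) (w : V) :
    #{e ∈ simpleDarts m | e.2 = w} ≤ degree m w := by
  refine (card_le_card_of_injOn Prod.fst (t := neighborFinset m w) ?_ ?_).trans
    (card_neighborFinset_le_degree w)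
  · intro e he
    simp only [simpleDarts, coe_filter, mem_filter, mem_univ, true_and, Set.mem_ofPred_eq] at he
    simp [neighborFinset, ← he.2, hsymm _ e.1, he.1.2]
  · intro e he e' he' h
    simp only [coe_filter, Set.mem_ofPred_eq] at he he'
    exact Prod.ext h (he.2.trans he'.2.symm)

theorem card_filter_simpleDarts_fst_mem_le {Δ : ℕ} (hΔ : ∀ v, degree m v ≤ Δ) (W : Finset V) :
    #{e ∈ simpleDarts m | e.1 ∈ W} ≤ #W * Δ :=
  card_filter_apply_mem_le Prod.fst W fun w _ => (card_filter_simpleDarts_fst_eq_le w).trans (hΔ w)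

theorem card_filter_simpleDarts_snd_mem_le (hsymm : ∀ u v, m u v = m v u) {Δ : ℕ}
    (hΔ : ∀ v, degree m v ≤ Δ) (W : Finset V) :
    #{e ∈ simpleDarts m | e.2 ∈ W} ≤ #W * Δ :=
  card_filter_apply_mem_le Prod.snd W fun w _ =>
    (card_filter_simpleDarts_snd_eq_le hsymm w).trans (hΔ w)

theorem mem_of_lSwitchingEquiv_mem_lSwitchings {x : V × (V × V) × (V × V)}
    (hx : lSwitchingEquiv V x ∈ lSwitchings m) :
    x ∈ loopVertices m ×ˢ simpleDarts m ×ˢ simpleDarts m := by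
  obtain ⟨v2, ⟨v1, v4⟩, ⟨v3, v5⟩⟩ := x
  simp only [lSwitchings, lSwitchingEquiv_apply, mem_filter, mem_univ, true_and] at hx
  obtain ⟨hinj, hloop, h14, h35, -⟩ := hx
  simp only [loopVertices, simpleDarts, mem_product, mem_filter, mem_univ, true_and]
  exact ⟨hloop, ⟨hinj.ne (by decide : (0 : Fin 5) ≠ 3), h14⟩,
    hinj.ne (by decide : (2 : Fin 5) ≠ 4), h35⟩

theorem card_lSwitchings_eq :
    #(lSwitchings m) = #{x ∈ loopVertices m ×ˢ simpleDarts m ×ˢ simpleDarts m |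
      lSwitchingEquiv V x ∈ lSwitchings m} :=
  (card_equiv (lSwitchingEquiv V) fun _ =>
    ⟨fun hx => (mem_filter.1 hx).2, fun hx => mem_filter.2
      ⟨mem_of_lSwitchingEquiv_mem_lSwitchings hx, hx⟩⟩).symm

theorem card_lSwitchings_le : #(lSwitchings m) ≤ #(loopVertices m) * #(simpleDarts m) ^ 2 := by
  rw [card_lSwitchings_eq, sq, ← card_product, ← card_product]
  exact card_filter_le _ _

theorem lSwitchingEquiv_mem_lSwitchings (hsymm : ∀ u v, m u v = m v u) {v2 : V}
    {e1 e2 : V × V} (hv2 : v2 ∈ loopVertices m) (he1 : e1 ∈ simpleDarts m)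
    (he2 : e2 ∈ simpleDarts m) (h1 : e1.1 ∉ insert v2 (neighborFinset m v2)) (h4 : e1.2 ≠ v2)
    (h3 : e2.1 ∉ {v2, e1.1, e1.2} ∪ neighborFinset m v2)
    (h5 : e2.2 ∉ {v2, e1.1, e1.2} ∪ neighborFinset m e1.2) :
    lSwitchingEquiv V (v2, e1, e2) ∈ lSwitchings m := by
  obtain ⟨v1, v4⟩ := e1
  obtain ⟨v3, v5⟩ := e2
  simp only [loopVertices, simpleDarts, neighborFinset, mem_filter, mem_univ, true_and,
    mem_insert, mem_union, mem_singleton, not_or, not_le, Nat.lt_one_iff] at *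
  simp only [lSwitchings, lSwitchingEquiv_apply, mem_filter, mem_univ, true_and]
  obtain ⟨⟨h32, h31, h34⟩, h23⟩ := h3
  obtain ⟨⟨h52, h51, h54⟩, h45⟩ := h5
  refine ⟨injective_vecCons_five h1.1 (Ne.symm h31) he1.1 (Ne.symm h51) (Ne.symm h32)
    (Ne.symm h4) (Ne.symm h52) h34 he2.1 (Ne.symm h54), hv2, he1.2, he2.2,
    hsymm v1 v2 ▸ h1.2, h23, h45⟩

theorem card_filter_notMem_lSwitchings_le (hsymm : ∀ u v, m u v = m v u) {Δ : ℕ}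
    (hΔ : ∀ v, degree m v ≤ Δ) {v2 : V} (hv2 : v2 ∈ loopVertices m) :
    #{p ∈ simpleDarts m ×ˢ simpleDarts m | lSwitchingEquiv V (v2, p) ∉ lSwitchings m}
      ≤ #(simpleDarts m) * (8 * Δ + 3 * Δ ^ 2) := by
  set S := simpleDarts m
  set N := neighborFinset m
  have hsub : {p ∈ S ×ˢ S | lSwitchingEquiv V (v2, p) ∉ lSwitchings m} ⊆
      {e ∈ S | e.1 ∈ insert v2 (N v2) ∨ e.2 = v2} ×ˢ S ∪
      {p ∈ S ×ˢ S | p.2.1 ∈ {v2, p.1.1, p.1.2} ∪ N v2 ∨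
        p.2.2 ∈ {v2, p.1.1, p.1.2} ∪ N p.1.2} := by
    rintro ⟨e1, e2⟩ hp
    obtain ⟨hp, hbad⟩ := mem_filter.1 hp
    obtain ⟨he1, he2⟩ := mem_product.1 hp
    have := fun h1 h4 h3 h5 =>
      hbad (lSwitchingEquiv_mem_lSwitchings hsymm hv2 he1 he2 h1 h4 h3 h5)
    simp only [mem_union, mem_product, mem_filter] at this ⊢
    tauto
  have hW : ∀ a b c w, #({a, b, c} ∪ N w) ≤ Δ + 3 := fun a b c w =>
    (card_union_le _ _).trans <| by
      rw [add_comm]; exact add_le_add (card_neighborFinset_le hΔ w) card_le_three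
  have hA : #{e ∈ S | e.1 ∈ insert v2 (N v2) ∨ e.2 = v2} ≤ (Δ + 1) * Δ + Δ := by
    rw [filter_or]
    refine (card_union_le _ _).trans (add_le_add ?_ ?_)
    · refine (card_filter_simpleDarts_fst_mem_le hΔ _).trans (Nat.mul_le_mul_right _ ?_)
      exact (card_insert_le _ _).trans (Nat.add_le_add_right (card_neighborFinset_le hΔ v2) 1)
    · exact (card_filter_simpleDarts_snd_eq_le hsymm v2).trans (hΔ v2)
  have hB : ∀ e1 ∈ S, #{e2 ∈ S | e2.1 ∈ {v2, e1.1, e1.2} ∪ N v2 ∨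
      e2.2 ∈ {v2, e1.1, e1.2} ∪ N e1.2} ≤ (Δ + 3) * Δ + (Δ + 3) * Δ := fun e1 _ => by
    rw [filter_or]
    exact (card_union_le _ _).trans (add_le_add
      ((card_filter_simpleDarts_fst_mem_le hΔ _).trans (Nat.mul_le_mul_right _ (hW ..)))
      ((card_filter_simpleDarts_snd_mem_le hsymm hΔ _).trans (Nat.mul_le_mul_right _ (hW ..))))
  calc _ ≤ _ := card_le_card hsub
    _ ≤ _ := card_union_le _ _
    _ ≤ ((Δ + 1) * Δ + Δ) * #S + #S * ((Δ + 3) * Δ + (Δ + 3) * Δ) := by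
      rw [card_product]
      exact add_le_add (Nat.mul_le_mul_right _ hA) (card_filter_product_le_of_forall_left hB)
    _ = #S * (8 * Δ + 3 * Δ ^ 2) := by ring

theorem card_mul_sq_le_card_lSwitchings_add (hsymm : ∀ u v, m u v = m v u) {Δ : ℕ}
    (hΔ : ∀ v, degree m v ≤ Δ) :
    #(loopVertices m) * #(simpleDarts m) ^ 2 ≤
      #(lSwitchings m) + #(loopVertices m) * (#(simpleDarts m) * (8 * Δ + 3 * Δ ^ 2)) := by
  rw [card_lSwitchings_eq, sq, ← card_product, ← card_product,
    ← card_filter_add_card_filter_not (fun x => lSwitchingEquiv V x ∈ lSwitchings m)]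
  exact Nat.add_le_add_left (card_filter_product_le_of_forall_left fun _ hv2 =>
    card_filter_notMem_lSwitchings_le hsymm hΔ hv2) _

end Multigraph

theorem mul_sq_mul_one_sub_div_le_of_count {m1 m2 s M Δ f : ℝ} (hm1 : 0 ≤ m1) (hm2 : 0 ≤ m2)
    (hM : 0 < M) (hsM : s + 4 * m2 + 2 * m1 = M) (hm1Δ : m1 ≤ Δ - 1)
    (hm2Δ : m2 ≤ (Δ - 1) ^ 2) (hf : m1 * s ^ 2 ≤ f + m1 * (s * (8 * Δ + 3 * Δ ^ 2))) :
    m1 * M ^ 2 * (1 - (11 * Δ ^ 2 - 4 * Δ + 4) / M) ≤ f := by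
  have hΔ : 1 ≤ Δ := by linarith
  have hsq : M ^ 2 - 2 * M * (2 * m1 + 4 * m2) ≤ s ^ 2 := by
    nlinarith [sq_nonneg (2 * m1 + 4 * m2)]
  have hbad : m1 * (s * (8 * Δ + 3 * Δ ^ 2)) ≤ m1 * (M * (8 * Δ + 3 * Δ ^ 2)) := by
    gcongr
    linarith
  have hk : 2 * m1 + 4 * m2 ≤ 2 * (Δ - 1) + 4 * (Δ - 1) ^ 2 := by linarith
  have hexpand : m1 * M ^ 2 * (1 - (11 * Δ ^ 2 - 4 * Δ + 4) / M)
      = m1 * M ^ 2 - m1 * M * (11 * Δ ^ 2 - 4 * Δ + 4) := by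
    field_simp
  rw [hexpand]
  nlinarith [mul_le_mul_of_nonneg_left hsq hm1, mul_le_mul_of_nonneg_left hk (mul_nonneg hm1 hM.le)]

open Multigraph

/-- **Bounds on the number `f_ℓ(G)` of ℓ-switchings applicable to `G`.**
`G ∈ 𝒢_{m1,m2}` with `m1 ≤ M₂/M` and `m2 ≤ M₂²/M²`.  `f_ℓ(G)` is the number
of ordered 5-tuples `(v1,…,v5)` of distinct vertices with a loop at `v2`,
`v1v4` and `v3v5` simple edges, and `v1v2`, `v2v3`, `v4v5` non-edges.  Then
`m1·M²·(1 − (11Δ² − 4Δ + 4)/M) ≤ f_ℓ(G) ≤ m1·M²`. -/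
theorem fl_bounds (n : ℕ) (d : Fin n → ℕ) (mG : Fin n → Fin n → ℕ)
    (M M2 Δ m1 m2 : ℕ)
    (hM : M = ∑ i, d i)
    (hM2 : M2 = ∑ i, d i * (d i - 1))
    (hΔ : Δ = Finset.univ.sup d)
    (hsymm : ∀ u v, mG u v = mG v u)
    (hdeg : ∀ v, (∑ u ∈ Finset.univ.filter (fun u => u ≠ v), mG v u)
        + 2 * mG v v = d v)
    (hloop : ∀ v, mG v v ≤ 1)
    (hmul : ∀ u v, u ≠ v → mG u v ≤ 2)
    (hm1 : m1 = ∑ v, mG v v)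
    (hm2 : 2 * m2 = Set.ncard {q : Fin n × Fin n | q.1 ≠ q.2 ∧ mG q.1 q.2 = 2})
    (hm1le : (m1 : ℝ) ≤ (M2 : ℝ) / M)
    (hm2le : (m2 : ℝ) ≤ (M2 : ℝ) ^ 2 / (M : ℝ) ^ 2)
    (fl : ℕ)
    (hfl : fl = Set.ncard {t : Fin 5 → Fin n | Function.Injective t ∧
      1 ≤ mG (t 1) (t 1) ∧
      mG (t 0) (t 3) = 1 ∧ mG (t 2) (t 4) = 1 ∧
      mG (t 0) (t 1) = 0 ∧ mG (t 1) (t 2) = 0 ∧ mG (t 3) (t 4) = 0}) :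
    (m1 : ℝ) * M ^ 2 * (1 - (11 * Δ ^ 2 - 4 * Δ + 4) / M) ≤ (fl : ℝ)
      ∧ fl ≤ m1 * M ^ 2 := by
  obtain rfl : d = degree mG := funext fun v => (hdeg v).symm
  have hΔv : ∀ v, degree mG v ≤ Δ := fun v => hΔ ▸ le_sup (mem_univ v)
  have hL : #(loopVertices mG) = m1 := hm1 ▸ card_loopVertices hloop
  have hD : #(doubleDarts mG) = 2 * m2 := by rw [hm2, ← coe_filter_univ, Set.ncard_coe_finset]; rfl
  have hT : #(lSwitchings mG) = fl := by rw [hfl, ← coe_filter_univ, Set.ncard_coe_finset]; rfl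
  have hS : #(simpleDarts mG) + 4 * m2 + 2 * m1 = M := by
    have := card_simpleDarts_add_card_doubleDarts hmul
    omega
  have hupper := card_lSwitchings_le (m := mG)
  have hlower := card_mul_sq_le_card_lSwitchings_add hsymm hΔv
  rw [hL, hT] at hupper hlower
  refine ⟨?_, hupper.trans (by gcongr; omega)⟩
  rcases M.eq_zero_or_pos with rfl | hMpos
  · obtain rfl : m1 = 0 := by omega
    simp
  have hM2M : (M2 : ℝ) / M ≤ Δ - 1 := by
    rw [div_le_iff₀ (by positivity), hM2, hM]
    exact cast_sum_mul_sub_one_le _ _ fun i _ => hΔv i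
  refine mul_sq_mul_one_sub_div_le_of_count (s := #(simpleDarts mG)) (m2 := m2) (by positivity)
    (by positivity) (by positivity) (by exact_mod_cast hS) (hm1le.trans hM2M)
    (hm2le.trans ?_) (by exact_mod_cast hlower)
  rw [← div_pow]
  exact pow_le_pow_left₀ (by positivity) hM2M 2
end

section
/- Let G ∈ 𝒢_{0,m2} (no loops) with m2 ≤ M_2²/M². For a simple ordered 2-path (v1,v2,v3) of G, let b_d(G,(v1,v2,v3)) denote the number of simple ordered 2-paths (u,v,w) of G with {u,v,w} ∩ {v1,v2,v3} = ∅ such that v1u, v2v and v3w are non-edges. Then for every simple ordered 2-path (v1,v2,v3) of G, M_2·(1 − (4·m2·(2Δ−3) + 3Δ³)/M_2) ≤ b_d(G,(v1,v2,v3)) ≤ M_2, i.e. M_2 − 4·m2·(2Δ−3) − 3Δ³ ≤ b_d(G,(v1,v2,v3)) ≤ M_2. -/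
/-
A simple ordered 2-path is determined by its middle vertex v and an ordered pair of distinct simple
neighbours of v, so there are `∑ᵥ sᵥ(sᵥ - 1)` of them, where `sᵥ` counts the simple neighbours.
As `d_v = s_v + 2 t_v` with `t_v` the number of double neighbours and `∑ᵥ tᵥ = 2 m₂`, this total
lies between `M₂ - 4 m₂ (2Δ - 3)` and `M₂`. A path `(u, v, w)` not counted by `b_d` has
`u ∈ {v₁, v₃} ∪ N(v₁) \ {v₂}`, or `v ∈ {v₂} ∪ N(v₂)`, or `w ∈ {v₁, v₃} ∪ N(v₃) \ {v₂}`. Each of these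
sets has at most `Δ + 1` elements, and a vertex is the first, middle or last vertex of at most
`Δ(Δ - 1)` paths, so at most `3(Δ + 1)Δ(Δ - 1) ≤ 3Δ³` paths are lost.
-/

open Finset

namespace Multigraph

variable {V : Type*} [Fintype V] [DecidableEq V] (m : V → V → ℕ)

def deg (v : V) : ℕ := ∑ u ∈ univ.erase v, m v u

def nbrs (v : V) : Finset V := {u | u ≠ v ∧ m v u ≠ 0}

def simpleNbrs (v : V) : Finset V := {u | u ≠ v ∧ m v u = 1}

def doubleNbrs (v : V) : Finset V := {u | u ≠ v ∧ m v u = 2}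

def simplePaths : Finset (V × V × V) :=
  {t | t.1 ≠ t.2.1 ∧ t.1 ≠ t.2.2 ∧ t.2.1 ≠ t.2.2 ∧ m t.1 t.2.1 = 1 ∧ m t.2.1 t.2.2 = 1}

variable {m}

lemma card_filter_ne_zero_le_sum {α : Type*} (s : Finset α) (f : α → ℕ) :
    #{a ∈ s | f a ≠ 0} ≤ ∑ a ∈ s, f a :=
  calc #{a ∈ s | f a ≠ 0} ≤ ∑ a ∈ s with f a ≠ 0, f a := by
        simpa using card_nsmul_le_sum _ f 1 fun a ha => Nat.one_le_iff_ne_zero.2 (mem_filter.1 ha).2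
    _ ≤ ∑ a ∈ s, f a := sum_le_sum_of_subset (filter_subset _ _)

lemma nbrs_eq_filter (v : V) : nbrs m v = {u ∈ univ.erase v | m v u ≠ 0} := by
  ext u; simp [nbrs]

lemma card_nbrs_le_deg (v : V) : #(nbrs m v) ≤ deg m v := by
  rw [nbrs_eq_filter]; exact card_filter_ne_zero_le_sum _ _

lemma card_erase_nbrs_add_le_deg {v x : V} (hx : x ≠ v) :
    #((nbrs m v).erase x) + m v x ≤ deg m v := by
  rw [deg, ← add_sum_erase _ _ (mem_erase.2 ⟨hx, mem_univ x⟩), nbrs_eq_filter, ← filter_erase]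
  linarith [card_filter_ne_zero_le_sum ((univ.erase v).erase x) (m v)]

lemma simpleNbrs_subset_nbrs (v : V) : simpleNbrs m v ⊆ nbrs m v := by
  intro u; simp +contextual [simpleNbrs, nbrs]

lemma card_simpleNbrs_le_deg (v : V) : #(simpleNbrs m v) ≤ deg m v :=
  (card_le_card (simpleNbrs_subset_nbrs v)).trans (card_nbrs_le_deg v)

lemma two_le_deg_of_simple_path (hsymm : ∀ u v, m u v = m v u) {v₁ v₂ v₃ : V}
    (h₁₂ : v₁ ≠ v₂) (h₁₃ : v₁ ≠ v₃) (h₂₃ : v₂ ≠ v₃) (hp₁₂ : m v₁ v₂ = 1) (hp₂₃ : m v₂ v₃ = 1) :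
    2 ≤ deg m v₂ := by
  have hsub : {v₁, v₃} ⊆ simpleNbrs m v₂ := by
    simp [insert_subset_iff, simpleNbrs, h₁₂, h₂₃.symm, hp₂₃, hsymm v₂ v₁, hp₁₂]
  rw [← card_pair h₁₃]
  exact (card_le_card hsub).trans (card_simpleNbrs_le_deg v₂)

lemma card_simpleNbrs_add_two_mul_card_doubleNbrs {v : V} (hmul : ∀ u, u ≠ v → m v u ≤ 2) :
    #(simpleNbrs m v) + 2 * #(doubleNbrs m v) = deg m v := by
  have h : ∀ u ∈ univ.erase v,
      m v u = (if m v u = 1 then 1 else 0) + 2 * (if m v u = 2 then 1 else 0) := by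
    intro u hu
    have := hmul u (ne_of_mem_erase hu)
    rcases (by omega : m v u = 0 ∨ m v u = 1 ∨ m v u = 2) with h | h | h <;> simp [h]
  rw [deg, sum_congr rfl h, sum_add_distrib, ← mul_sum, ← card_filter, ← card_filter]
  rw [← filter_ne', filter_filter, filter_filter]
  rfl

lemma sum_card_doubleNbrs :
    ∑ v, #(doubleNbrs m v) = #{q : V × V | q.1 ≠ q.2 ∧ m q.1 q.2 = 2} := by
  rw [card_filter, Fintype.sum_prod_type]
  refine sum_congr rfl fun v _ => ?_
  rw [doubleNbrs, card_filter]
  exact sum_congr rfl fun u _ => by simp only [ne_comm]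

lemma card_filter_simplePaths_snd (hsymm : ∀ u v, m u v = m v u) (v : V) :
    #{t ∈ simplePaths m | t.2.1 = v} = #(simpleNbrs m v) * (#(simpleNbrs m v) - 1) := by
  rw [Nat.mul_sub_one, ← offDiag_card]
  refine card_nbij' (fun t => (t.1, t.2.2)) (fun p => (p.1, v, p.2)) ?_ ?_ ?_ ?_
  · rintro ⟨u, w, x⟩
    simp only [coe_filter, simplePaths, simpleNbrs, mem_filter, mem_univ, true_and,
      mem_coe, mem_offDiag]
    rintro ⟨⟨huw, hux, hwx, huw1, hwx1⟩, rfl⟩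
    exact ⟨⟨huw, hsymm w u ▸ huw1⟩, ⟨hwx.symm, hwx1⟩, hux⟩
  · rintro ⟨u, w⟩
    simp +contextual [simplePaths, simpleNbrs, hsymm _ v, ne_comm]
  · rintro ⟨u, w, x⟩
    simp +contextual
  · intro p _; rfl

lemma card_simplePaths (hsymm : ∀ u v, m u v = m v u) :
    #(simplePaths m) = ∑ v, #(simpleNbrs m v) * (#(simpleNbrs m v) - 1) := by
  rw [card_eq_sum_card_fiberwise (f := fun t => t.2.1) (t := univ) fun _ _ => mem_univ _]
  exact sum_congr rfl fun v _ => card_filter_simplePaths_snd hsymm v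

lemma card_filter_simplePaths_fst_le (hsymm : ∀ u v, m u v = m v u) {Δ : ℕ}
    (hΔ : ∀ v, deg m v ≤ Δ) (x : V) :
    #{t ∈ simplePaths m | t.1 = x} ≤ Δ * (Δ - 1) := by
  calc #{t ∈ simplePaths m | t.1 = x}
      ≤ #((simpleNbrs m x).sigma fun v => (simpleNbrs m v).erase x) := by
        refine card_le_card_of_injOn (fun t => ⟨t.2.1, t.2.2⟩) ?_ ?_
        · rintro ⟨u, w, y⟩
          simp only [coe_filter, simplePaths, simpleNbrs, mem_filter, mem_univ, true_and,
            mem_coe, mem_sigma, mem_erase]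
          rintro ⟨⟨huw, huy, hwy, huw1, hwy1⟩, rfl⟩
          exact ⟨⟨huw.symm, huw1⟩, huy.symm, hwy.symm, hwy1⟩
        · rintro ⟨u, w, y⟩ ht ⟨u', w', y'⟩ ht' h
          simp only [coe_filter, Set.mem_ofPred_eq, Sigma.mk.injEq, heq_eq_eq] at ht ht' h
          simp [ht.2, ht'.2, h.1, h.2]
    _ = ∑ v ∈ simpleNbrs m x, (#(simpleNbrs m v) - 1) := by
        rw [card_sigma]
        refine sum_congr rfl fun v hv => card_erase_of_mem ?_
        simp only [simpleNbrs, mem_filter, mem_univ, true_and] at hv ⊢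
        exact ⟨hv.1.symm, hsymm v x ▸ hv.2⟩
    _ ≤ #(simpleNbrs m x) * (Δ - 1) :=
        sum_le_card_nsmul _ _ _ fun v _ => Nat.sub_le_sub_right
          ((card_simpleNbrs_le_deg v).trans (hΔ v)) 1
    _ ≤ Δ * (Δ - 1) := Nat.mul_le_mul_right _ ((card_simpleNbrs_le_deg x).trans (hΔ x))

lemma card_filter_simplePaths_snd_snd (hsymm : ∀ u v, m u v = m v u) (x : V) :
    #{t ∈ simplePaths m | t.2.2 = x} = #{t ∈ simplePaths m | t.1 = x} := by
  have hrev : ∀ u v w, (u, v, w) ∈ simplePaths m → (w, v, u) ∈ simplePaths m := by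
    simp only [simplePaths, mem_filter, mem_univ, true_and]
    rintro u v w ⟨huv, huw, hvw, huv1, hvw1⟩
    exact ⟨hvw.symm, huw.symm, huv.symm, hsymm w v ▸ hvw1, hsymm v u ▸ huv1⟩
  refine card_nbij' (fun t => (t.2.2, t.2.1, t.1)) (fun t => (t.2.2, t.2.1, t.1)) ?_ ?_ ?_ ?_
  all_goals rintro ⟨u, v, w⟩
  · simpa using fun h hw => ⟨hrev u v w h, hw⟩
  · simpa using fun h hu => ⟨hrev u v w h, hu⟩
  all_goals simp

variable (m) in
def Avoids (v₁ v₂ v₃ : V) (t : V × V × V) : Prop :=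
  t.1 ≠ v₁ ∧ t.1 ≠ v₂ ∧ t.1 ≠ v₃ ∧ t.2.1 ≠ v₁ ∧ t.2.1 ≠ v₂ ∧ t.2.1 ≠ v₃ ∧
    t.2.2 ≠ v₁ ∧ t.2.2 ≠ v₂ ∧ t.2.2 ≠ v₃ ∧ m v₁ t.1 = 0 ∧ m v₂ t.2.1 = 0 ∧ m v₃ t.2.2 = 0

instance (v₁ v₂ v₃ : V) : DecidablePred (Avoids m v₁ v₂ v₃) := fun _ => by
  unfold Avoids; infer_instance

lemma mem_of_not_avoids (hsymm : ∀ u v, m u v = m v u) {v₁ v₂ v₃ : V}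
    (h₁₂ : m v₁ v₂ = 1) (h₂₃ : m v₂ v₃ = 1) {t : V × V × V} (ht : t ∈ simplePaths m)
    (hbad : ¬ Avoids m v₁ v₂ v₃ t) :
    t.1 ∈ insert v₁ (insert v₃ ((nbrs m v₁).erase v₂)) ∨ t.2.1 ∈ insert v₂ (nbrs m v₂) ∨
      t.2.2 ∈ insert v₁ (insert v₃ ((nbrs m v₃).erase v₂)) := by
  obtain ⟨u, v, w⟩ := t
  -- unless `v = v₂` or `v ∈ N(v₂)`, the vertex `v` is not `v₁, v₃` and neither `u` nor `w` is `v₂`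
  simp only [simplePaths, mem_filter, mem_univ, true_and] at ht
  simp only [Avoids] at hbad
  simp only [mem_insert, mem_erase, nbrs, mem_filter, mem_univ, true_and]
  have := hsymm v₁ v₂
  have := hsymm v₂ v₃
  have := hsymm u v
  have := hsymm v w
  grind

lemma card_filter_mem_le_mul {α β : Type*} [DecidableEq β] (s : Finset α) (f : α → β)
    (t : Finset β) {n : ℕ} (hn : ∀ b ∈ t, #{a ∈ s | f a = b} ≤ n) :
    #{a ∈ s | f a ∈ t} ≤ #t * n := by
  rw [mul_comm]
  refine card_le_mul_card_image_of_maps_to (fun a ha => (mem_filter.1 ha).2) n fun b hb => ?_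
  rw [filter_filter]
  exact (card_le_card (monotone_filter_right _ fun a _ h => h.2)).trans (hn b hb)

lemma card_insert_insert_erase_nbrs_le {v x : V} (a b : V) (hx : x ≠ v) (h : m v x = 1)
    {Δ : ℕ} (hΔ : deg m v ≤ Δ) : #(insert a (insert b ((nbrs m v).erase x))) ≤ Δ + 1 := by
  have := card_erase_nbrs_add_le_deg (m := m) hx
  have := card_insert_le a (insert b ((nbrs m v).erase x))
  have := card_insert_le b ((nbrs m v).erase x)
  omega

lemma card_filter_not_avoids_le (hsymm : ∀ u v, m u v = m v u) {Δ : ℕ}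
    (hΔ : ∀ v, deg m v ≤ Δ) {v₁ v₂ v₃ : V} (h₁₂ : v₁ ≠ v₂) (h₂₃ : v₂ ≠ v₃)
    (hp₁₂ : m v₁ v₂ = 1) (hp₂₃ : m v₂ v₃ = 1) :
    #{t ∈ simplePaths m | ¬ Avoids m v₁ v₂ v₃ t} ≤ 3 * Δ ^ 3 := by
  set A := insert v₁ (insert v₃ ((nbrs m v₁).erase v₂))
  set B := insert v₂ (nbrs m v₂)
  set C := insert v₁ (insert v₃ ((nbrs m v₃).erase v₂))
  have hcover : {t ∈ simplePaths m | ¬ Avoids m v₁ v₂ v₃ t} ⊆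
      ({t ∈ simplePaths m | t.1 ∈ A} ∪ {t ∈ simplePaths m | t.2.1 ∈ B}) ∪
        {t ∈ simplePaths m | t.2.2 ∈ C} := by
    intro t ht
    obtain ⟨hP, hbad⟩ := mem_filter.1 ht
    simp only [mem_union, mem_filter, hP, true_and, or_assoc]
    exact mem_of_not_avoids hsymm hp₁₂ hp₂₃ hP hbad
  have hA : #{t ∈ simplePaths m | t.1 ∈ A} ≤ (Δ + 1) * (Δ * (Δ - 1)) :=
    (card_filter_mem_le_mul _ _ _ fun x _ => card_filter_simplePaths_fst_le hsymm hΔ x).trans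
      (Nat.mul_le_mul_right _ (card_insert_insert_erase_nbrs_le _ _ h₁₂.symm hp₁₂ (hΔ v₁)))
  have hB : #{t ∈ simplePaths m | t.2.1 ∈ B} ≤ (Δ + 1) * (Δ * (Δ - 1)) := by
    refine (card_filter_mem_le_mul _ _ _ fun v _ => ?_).trans
      (Nat.mul_le_mul_right _ ((card_insert_le _ _).trans
        (Nat.add_le_add_right ((card_nbrs_le_deg v₂).trans (hΔ v₂)) 1)))
    rw [card_filter_simplePaths_snd hsymm]
    have := (card_simpleNbrs_le_deg v).trans (hΔ v)
    exact Nat.mul_le_mul this (Nat.sub_le_sub_right this 1)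
  have hC : #{t ∈ simplePaths m | t.2.2 ∈ C} ≤ (Δ + 1) * (Δ * (Δ - 1)) := by
    refine (card_filter_mem_le_mul _ _ _ fun x _ => ?_).trans (Nat.mul_le_mul_right _
      (card_insert_insert_erase_nbrs_le _ _ h₂₃ (hsymm v₃ v₂ ▸ hp₂₃) (hΔ v₃)))
    rw [card_filter_simplePaths_snd_snd hsymm]
    exact card_filter_simplePaths_fst_le hsymm hΔ x
  calc #{t ∈ simplePaths m | ¬ Avoids m v₁ v₂ v₃ t}
      ≤ 3 * ((Δ + 1) * (Δ * (Δ - 1))) := by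
        grw [card_le_card hcover, card_union_le, card_union_le, hA, hB, hC]
        omega
    _ ≤ 3 * Δ ^ 3 := by
        rcases Nat.eq_zero_or_pos Δ with h | h
        · simp [h]
        · zify [h]; nlinarith

lemma card_simplePaths_le_sum (hsymm : ∀ u v, m u v = m v u) :
    #(simplePaths m) ≤ ∑ v, deg m v * (deg m v - 1) := by
  rw [card_simplePaths hsymm]
  gcongr with v
  all_goals exact card_simpleNbrs_le_deg v

lemma add_two_mul_mul_pred_le {s t Δ : ℕ} (h : s + 2 * t ≤ Δ) :
    (s + 2 * t) * (s + 2 * t - 1) ≤ s * (s - 1) + 2 * t * (2 * Δ - 3) := by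
  rcases Nat.eq_zero_or_pos t with rfl | ht
  · simp
  · have : 3 ≤ 2 * Δ := by omega
    have : 1 ≤ s + 2 * t := by omega
    rcases Nat.eq_zero_or_pos s with rfl | hs
    · zify [this, ‹3 ≤ 2 * Δ›]; nlinarith
    · zify [this, ‹3 ≤ 2 * Δ›, hs]; nlinarith

lemma sum_deg_mul_pred_le (hsymm : ∀ u v, m u v = m v u) (hmul : ∀ u v, u ≠ v → m u v ≤ 2)
    {Δ : ℕ} (hΔ : ∀ v, deg m v ≤ Δ) :
    ∑ v, deg m v * (deg m v - 1) ≤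
      #(simplePaths m) + 2 * #{q : V × V | q.1 ≠ q.2 ∧ m q.1 q.2 = 2} * (2 * Δ - 3) := by
  rw [card_simplePaths hsymm, ← sum_card_doubleNbrs, mul_sum, sum_mul, ← sum_add_distrib]
  refine sum_le_sum fun v _ => ?_
  have hdeg := card_simpleNbrs_add_two_mul_card_doubleNbrs fun u hu => hmul v u hu.symm
  have hΔv := hΔ v
  rw [← hdeg] at hΔv ⊢
  simpa only [mul_assoc] using add_two_mul_mul_pred_le hΔv

end Multigraph

open Multigraph

theorem bd_path_bounds_general (n : ℕ) (d : Fin n → ℕ) (mG : Fin n → Fin n → ℕ)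
    (M2 Δ m2 : ℕ)
    (hM2 : M2 = ∑ i, d i * (d i - 1))
    (hΔ : Δ = Finset.univ.sup d)
    (hsymm : ∀ u v, mG u v = mG v u)
    (hdeg : ∀ v, (∑ u ∈ Finset.univ.filter (fun u => u ≠ v), mG v u)
        + 2 * mG v v = d v)
    (hloop : ∀ v, mG v v = 0)
    (hmul : ∀ u v, u ≠ v → mG u v ≤ 2)
    (hm2 : 2 * m2 = Set.ncard {q : Fin n × Fin n | q.1 ≠ q.2 ∧ mG q.1 q.2 = 2})
    (v1 v2 v3 : Fin n)
    (hdist : v1 ≠ v2 ∧ v1 ≠ v3 ∧ v2 ≠ v3)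
    (hpath : mG v1 v2 = 1 ∧ mG v2 v3 = 1)
    (bd1 : ℕ)
    (hbd1 : bd1 = Set.ncard {t : Fin n × Fin n × Fin n |
      t.1 ≠ t.2.1 ∧ t.1 ≠ t.2.2 ∧ t.2.1 ≠ t.2.2 ∧
      mG t.1 t.2.1 = 1 ∧ mG t.2.1 t.2.2 = 1 ∧
      t.1 ≠ v1 ∧ t.1 ≠ v2 ∧ t.1 ≠ v3 ∧
      t.2.1 ≠ v1 ∧ t.2.1 ≠ v2 ∧ t.2.1 ≠ v3 ∧
      t.2.2 ≠ v1 ∧ t.2.2 ≠ v2 ∧ t.2.2 ≠ v3 ∧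
      mG v1 t.1 = 0 ∧ mG v2 t.2.1 = 0 ∧ mG v3 t.2.2 = 0}) :
    (M2 : ℝ) - 4 * m2 * (2 * Δ - 3) - 3 * Δ ^ 3 ≤ (bd1 : ℝ) ∧ bd1 ≤ M2 := by
  obtain ⟨h12, h13, h23⟩ := hdist
  obtain ⟨hp12, hp23⟩ := hpath
  have hdeg' : ∀ v, deg mG v = d v := fun v => by simpa [deg, hloop, filter_ne'] using hdeg v
  have hΔd : ∀ v, deg mG v ≤ Δ := fun v => hdeg' v ▸ hΔ ▸ le_sup (mem_univ v)
  have hΔ2 : 2 ≤ Δ := (two_le_deg_of_simple_path hsymm h12 h13 h23 hp12 hp23).trans (hΔd v2)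
  have hm2' : 2 * m2 = #{q : Fin n × Fin n | q.1 ≠ q.2 ∧ mG q.1 q.2 = 2} := by
    rw [hm2, ← Set.ncard_coe_finset]; simp
  have hbd : bd1 = #{t ∈ simplePaths mG | Avoids mG v1 v2 v3 t} := by
    rw [hbd1, ← Set.ncard_coe_finset]; congr 1; ext t; simp [simplePaths, Avoids, and_assoc]
  have hsplit : #{t ∈ simplePaths mG | Avoids mG v1 v2 v3 t} +
      #{t ∈ simplePaths mG | ¬ Avoids mG v1 v2 v3 t} = #(simplePaths mG) :=
    card_filter_add_card_filter_not _
  have hlow := sum_deg_mul_pred_le hsymm hmul hΔd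
  have hup := card_simplePaths_le_sum hsymm (m := mG)
  have hbad := card_filter_not_avoids_le hsymm hΔd h12 h23 hp12 hp23
  simp only [hdeg', ← hM2, ← hm2'] at hlow hup
  refine ⟨?_, by omega⟩
  have hN : M2 ≤ bd1 + 4 * m2 * (2 * Δ - 3) + 3 * Δ ^ 3 := by
    have : 2 * (2 * m2) * (2 * Δ - 3) = 4 * m2 * (2 * Δ - 3) := by ring
    omega
  have hcast : ((2 * Δ - 3 : ℕ) : ℝ) = 2 * Δ - 3 := by rw [Nat.cast_sub (by omega)]; push_cast; ring
  have hR := (Nat.cast_le (α := ℝ)).2 hN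
  push_cast [hcast] at hR
  linarith

/-- **Bounds on `b_d(G, (v1,v2,v3))`.**
`G ∈ 𝒢_{0,m2}` (loopless) with `m2 ≤ M₂²/M²`.  For a simple ordered 2-path
`(v1,v2,v3)` of `G`, `b_d(G,(v1,v2,v3))` is the number of simple ordered
2-paths `(u,v,w)` of `G` with `{u,v,w} ∩ {v1,v2,v3} = ∅` such that `v1u`,
`v2v`, `v3w` are non-edges.  Then
`M₂ − 4·m2·(2Δ−3) − 3Δ³ ≤ b_d(G,(v1,v2,v3)) ≤ M₂`. -/
theorem bd_path_bounds (n : ℕ) (d : Fin n → ℕ) (mG : Fin n → Fin n → ℕ)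
    (M M2 Δ m2 : ℕ)
    (hM : M = ∑ i, d i)
    (hM2 : M2 = ∑ i, d i * (d i - 1))
    (hΔ : Δ = Finset.univ.sup d)
    (hsymm : ∀ u v, mG u v = mG v u)
    (hdeg : ∀ v, (∑ u ∈ Finset.univ.filter (fun u => u ≠ v), mG v u)
        + 2 * mG v v = d v)
    (hloop : ∀ v, mG v v = 0)
    (hmul : ∀ u v, u ≠ v → mG u v ≤ 2)
    (hm2 : 2 * m2 = Set.ncard {q : Fin n × Fin n | q.1 ≠ q.2 ∧ mG q.1 q.2 = 2})
    (hm2le : (m2 : ℝ) ≤ (M2 : ℝ) ^ 2 / (M : ℝ) ^ 2)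
    (v1 v2 v3 : Fin n)
    (hdist : v1 ≠ v2 ∧ v1 ≠ v3 ∧ v2 ≠ v3)
    (hpath : mG v1 v2 = 1 ∧ mG v2 v3 = 1)
    (bd1 : ℕ)
    (hbd1 : bd1 = Set.ncard {t : Fin n × Fin n × Fin n |
      t.1 ≠ t.2.1 ∧ t.1 ≠ t.2.2 ∧ t.2.1 ≠ t.2.2 ∧
      mG t.1 t.2.1 = 1 ∧ mG t.2.1 t.2.2 = 1 ∧
      t.1 ≠ v1 ∧ t.1 ≠ v2 ∧ t.1 ≠ v3 ∧
      t.2.1 ≠ v1 ∧ t.2.1 ≠ v2 ∧ t.2.1 ≠ v3 ∧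
      t.2.2 ≠ v1 ∧ t.2.2 ≠ v2 ∧ t.2.2 ≠ v3 ∧
      mG v1 t.1 = 0 ∧ mG v2 t.2.1 = 0 ∧ mG v3 t.2.2 = 0}) :
    (M2 : ℝ) - 4 * m2 * (2 * Δ - 3) - 3 * Δ ^ 3 ≤ (bd1 : ℝ) ∧ bd1 ≤ M2 :=
  bd_path_bounds_general n d mG M2 Δ m2 hM2 hΔ hsymm hdeg hloop hmul hm2 v1 v2 v3 hdist hpath bd1
    hbd1
end

section
/- Let G ∈ 𝒢_{0,m2} (no loops) with m2 ≤ M_2²/M². Let f_d(G) denote the number of ordered 6-tuples (v1,v2,v3,v4,v5,v6) of distinct vertices of G such that v2v5 is a double edge, v1v4 and v3v6 are simple edges, and v1v2, v2v3, v4v5 and v5v6 are non-edges (the number of d-switchings applicable to G). Then 2·m2·M²·(1 − (12Δ² − 4Δ + 8)/M) ≤ f_d(G) ≤ 2·m2·M². -/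
/-!
A d-switching is read off from a triple `(a, q, r)` of ordered pairs: `a = (v₂, v₅)` spans a
double edge and `q = (v₁, v₄)`, `r = (v₃, v₆)` span simple edges. There are `2m₂` choices of `a`
and `|S| = M - 4m₂ ≤ M` choices of each of `q` and `r`, which gives the upper bound. A triple
fails to be a switching only if `q` or `r` meets `a` or has an endpoint adjacent to the
corresponding endpoint of `a`, or `q` and `r` meet; for fixed `a` at most `(12Δ + 4Δ²)|S|`
pairs `(q, r)` do. The lower bound follows because `M₂ ≤ (Δ - 1)M` forces `m₂ ≤ (Δ - 1)²`.
-/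

open Finset

namespace DSwitching

section Counting

variable {α β : Type*}

lemma card_filter_ne_zero_le_sum (s : Finset α) (f : α → ℕ) :
    #(s.filter (f · ≠ 0)) ≤ ∑ i ∈ s, f i := by
  rw [card_eq_sum_ones, sum_filter]
  exact sum_le_sum fun i _ => by split_ifs <;> omega

lemma card_filter_product_le (s : Finset α) (t : Finset β) (p : α → β → Prop)
    [∀ a, DecidablePred (p a)] (k : ℕ) (h : ∀ a ∈ s, #(t.filter (p a)) ≤ k) :
    #((s ×ˢ t).filter fun x => p x.1 x.2) ≤ #s * k := by
  rw [card_filter, sum_product, ← smul_eq_mul]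
  exact sum_le_card_nsmul _ _ _ fun a ha => (card_filter _ _).symm.trans_le (h a ha)

lemma card_filter_or_le (s : Finset α) (p q : α → Prop) [DecidablePred p] [DecidablePred q] :
    #(s.filter fun x => p x ∨ q x) ≤ #(s.filter p) + #(s.filter q) := by
  classical
  rw [filter_or]
  exact card_union_le _ _

end Counting

variable {V : Type*}

/-- `(v₁, …, v₆)` from the double arc `x.1 = (v₂, v₅)` and the simple arcs `x.2.1 = (v₁, v₄)`,
`x.2.2 = (v₃, v₆)`. -/
def switchingTuple (x : (V × V) × (V × V) × (V × V)) : Fin 6 → V :=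
  ![x.2.1.1, x.1.1, x.2.2.1, x.2.1.2, x.1.2, x.2.2.2]

lemma switchingTuple_injective : Function.Injective (switchingTuple (V := V)) := by
  intro x y h
  have h i := congrFun h i
  ext
  exacts [h 1, h 4, h 0, h 3, h 2, h 5]

lemma injective_vec_six {a b c d e f : V}
    (hab : a ≠ b) (hac : a ≠ c) (had : a ≠ d) (hae : a ≠ e) (haf : a ≠ f)
    (hbc : b ≠ c) (hbd : b ≠ d) (hbe : b ≠ e) (hbf : b ≠ f)
    (hcd : c ≠ d) (hce : c ≠ e) (hcf : c ≠ f)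
    (hde : d ≠ e) (hdf : d ≠ f) (hef : e ≠ f) :
    Function.Injective ![a, b, c, d, e, f] := by
  intro i j h
  fin_cases i <;> fin_cases j <;> simp_all [eq_comm]

variable [Fintype V] [DecidableEq V] (m : V → V → ℕ)

def simpleArcs : Finset (V × V) := univ.filter fun q => m q.1 q.2 = 1

def doubleArcs : Finset (V × V) := univ.filter fun q => m q.1 q.2 = 2

def IsSwitching (t : Fin 6 → V) : Prop :=
  Function.Injective t ∧ m (t 1) (t 4) = 2 ∧ m (t 0) (t 3) = 1 ∧ m (t 2) (t 5) = 1 ∧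
    m (t 0) (t 1) = 0 ∧ m (t 1) (t 2) = 0 ∧ m (t 3) (t 4) = 0 ∧ m (t 4) (t 5) = 0

instance : DecidablePred (IsSwitching m) := fun _ => by unfold IsSwitching; infer_instance

def Meets (q a : V × V) : Prop := q.1 = a.1 ∨ q.1 = a.2 ∨ q.2 = a.1 ∨ q.2 = a.2

instance (q a : V × V) : Decidable (Meets q a) := by unfold Meets; infer_instance

/-- The simple arc `q` cannot serve as `(v₁, v₄)` (nor, by symmetry of `m`, as `(v₃, v₆)`) next to
the double arc `a = (v₂, v₅)`. -/
def Clashes (a q : V × V) : Prop := Meets q a ∨ m a.1 q.1 ≠ 0 ∨ m a.2 q.2 ≠ 0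

instance (a q : V × V) : Decidable (Clashes m a q) := by unfold Clashes; infer_instance

lemma ncard_setOf_isSwitching :
    {t | IsSwitching m t}.ncard =
      #((doubleArcs m ×ˢ simpleArcs m ×ˢ simpleArcs m).filter
        fun x => IsSwitching m (switchingTuple x)) := by
  rw [← Set.ncard_coe_finset, ← Set.ncard_image_of_injective _ switchingTuple_injective]
  congr 1
  ext t
  simp only [Set.mem_ofPred_eq, coe_filter, Set.mem_image, mem_product,
    doubleArcs, simpleArcs, mem_filter, mem_univ, true_and]
  constructor
  · intro ht
    have hx : switchingTuple ((t 1, t 4), (t 0, t 3), (t 2, t 5)) = t := by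
      funext i; fin_cases i <;> rfl
    exact ⟨_, ⟨⟨ht.2.1, ht.2.2.1, ht.2.2.2.1⟩, hx ▸ ht⟩, hx⟩
  · rintro ⟨x, ⟨_, hx⟩, rfl⟩
    exact hx

omit [DecidableEq V] in
lemma card_doubleArcs (hloop : ∀ v, m v v = 0) :
    #(doubleArcs m) = {q : V × V | q.1 ≠ q.2 ∧ m q.1 q.2 = 2}.ncard := by
  rw [← Set.ncard_coe_finset]
  congr 1
  ext q
  simp only [doubleArcs, coe_filter, mem_univ, true_and, Set.mem_ofPred_eq]
  exact ⟨fun h => ⟨fun hq => by simp [hq, hloop] at h, h⟩, And.right⟩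

lemma sum_sum_eq_card_simpleArcs_add (hloop : ∀ v, m v v = 0)
    (hle : ∀ u v, u ≠ v → m u v ≤ 2) :
    ∑ v, ∑ u, m v u = #(simpleArcs m) + 2 * #(doubleArcs m) := by
  rw [← Fintype.sum_prod_type', simpleArcs, doubleArcs, card_filter, card_filter, mul_sum,
    ← sum_add_distrib]
  refine sum_congr rfl fun q _ => ?_
  by_cases hq : q.1 = q.2
  · simp [hq, hloop]
  · have := hle _ _ hq
    split_ifs <;> omega

section Degrees

variable {m} {Δ : ℕ} (hΔ : ∀ v, ∑ u, m v u ≤ Δ) (hsymm : ∀ u v, m u v = m v u)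
include hΔ

lemma card_simpleArcs_filter_fst_le (v : V) : #((simpleArcs m).filter (·.1 = v)) ≤ Δ := by
  refine le_trans (card_le_card_of_injOn Prod.snd (t := univ.filter (m v · ≠ 0)) ?_ ?_)
    ((card_filter_ne_zero_le_sum _ _).trans (hΔ v))
  · rintro q hq
    simp only [simpleArcs, mem_coe, mem_filter, mem_univ, true_and] at hq ⊢
    obtain ⟨h1, rfl⟩ := hq
    omega
  · intro q hq q' hq' h
    simp only [mem_coe, mem_filter] at hq hq'
    exact Prod.ext (hq.2.trans hq'.2.symm) h

lemma card_simpleArcs_filter_adj_fst_le (v : V) :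
    #((simpleArcs m).filter (m v ·.1 ≠ 0)) ≤ Δ * Δ := by
  have hsub : (simpleArcs m).filter (m v ·.1 ≠ 0) ⊆
      (univ.filter (m v · ≠ 0)).biUnion fun w => (simpleArcs m).filter (·.1 = w) := by
    intro q hq
    simp only [mem_filter, mem_biUnion, mem_univ, true_and] at hq ⊢
    exact ⟨q.1, hq.2, hq.1, rfl⟩
  refine (card_le_card hsub).trans (card_biUnion_le.trans ?_)
  refine (sum_le_card_nsmul _ _ Δ fun w _ => card_simpleArcs_filter_fst_le hΔ w).trans ?_
  rw [smul_eq_mul]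
  exact Nat.mul_le_mul_right _ ((card_filter_ne_zero_le_sum _ _).trans (hΔ v))

omit [DecidableEq V] hΔ in
include hsymm in
lemma card_simpleArcs_filter_snd (P : V → Prop) [DecidablePred P] :
    #((simpleArcs m).filter (P ·.2)) = #((simpleArcs m).filter (P ·.1)) :=
  card_nbij' Prod.swap Prod.swap (by intro q; simp [simpleArcs, hsymm q.1])
    (by intro q; simp [simpleArcs, hsymm q.1]) (fun q _ => q.swap_swap) (fun q _ => q.swap_swap)

include hsymm

lemma card_simpleArcs_filter_meets_le (a : V × V) :
    #((simpleArcs m).filter (Meets · a)) ≤ 4 * Δ := by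
  unfold Meets
  have h1 := card_simpleArcs_filter_fst_le hΔ a.1
  have h2 := card_simpleArcs_filter_fst_le hΔ a.2
  have h3 := (card_simpleArcs_filter_snd hsymm (· = a.1)).trans_le h1
  have h4 := (card_simpleArcs_filter_snd hsymm (· = a.2)).trans_le h2
  have := card_filter_or_le (simpleArcs m) (·.1 = a.1)
    (fun q => q.1 = a.2 ∨ q.2 = a.1 ∨ q.2 = a.2)
  have := card_filter_or_le (simpleArcs m) (·.1 = a.2) (fun q => q.2 = a.1 ∨ q.2 = a.2)
  have := card_filter_or_le (simpleArcs m) (·.2 = a.1) (·.2 = a.2)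
  omega

lemma card_simpleArcs_filter_clashes_le (a : V × V) :
    #((simpleArcs m).filter (Clashes m a)) ≤ 4 * Δ + 2 * (Δ * Δ) := by
  unfold Clashes
  have h1 := card_simpleArcs_filter_meets_le hΔ hsymm a
  have h2 := card_simpleArcs_filter_adj_fst_le hΔ a.1
  have h3 := (card_simpleArcs_filter_snd hsymm (m a.2 · ≠ 0)).trans_le
    (card_simpleArcs_filter_adj_fst_le hΔ a.2)
  have := card_filter_or_le (simpleArcs m) (Meets · a)
    (fun q => m a.1 q.1 ≠ 0 ∨ m a.2 q.2 ≠ 0)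
  have := card_filter_or_le (simpleArcs m) (m a.1 ·.1 ≠ 0) (m a.2 ·.2 ≠ 0)
  omega

end Degrees

omit [Fintype V] [DecidableEq V] in
lemma clashes_of_not_isSwitching (hsymm : ∀ u v, m u v = m v u) (hloop : ∀ v, m v v = 0)
    {x : (V × V) × (V × V) × (V × V)} (ha : m x.1.1 x.1.2 = 2) (hq : m x.2.1.1 x.2.1.2 = 1)
    (hr : m x.2.2.1 x.2.2.2 = 1) (hx : ¬ IsSwitching m (switchingTuple x)) :
    Clashes m x.1 x.2.1 ∨ Clashes m x.1 x.2.2 ∨ Meets x.2.2 x.2.1 := by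
  obtain ⟨⟨a₁, a₂⟩, ⟨q₁, q₂⟩, ⟨r₁, r₂⟩⟩ := x
  have hne {u v : V} (h : m u v ≠ 0) : u ≠ v := by rintro rfl; exact h (hloop u)
  contrapose! hx
  simp only [Clashes, Meets, not_or, not_not] at hx
  obtain ⟨⟨⟨h1, h2, h3, h4⟩, h5, h6⟩, ⟨⟨h7, h8, h9, h10⟩, h11, h12⟩, h13, h14, h15, h16⟩ := hx
  refine ⟨injective_vec_six h1 (Ne.symm h13) (hne (by simp_all)) h2 (Ne.symm h15)
    (Ne.symm h7) (Ne.symm h3) (hne (by simp_all)) (Ne.symm h9) h14 h8 (hne (by simp_all)) h4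
    (Ne.symm h16) (Ne.symm h10), ha, hq, hr, hsymm q₁ a₁ ▸ h5, h11, hsymm q₂ a₂ ▸ h6, h12⟩

lemma card_filter_not_isSwitching_le {Δ : ℕ} (hΔ : ∀ v, ∑ u, m v u ≤ Δ)
    (hsymm : ∀ u v, m u v = m v u) (hloop : ∀ v, m v v = 0) :
    #((doubleArcs m ×ˢ simpleArcs m ×ˢ simpleArcs m).filter
        fun x => ¬ IsSwitching m (switchingTuple x)) ≤
      #(doubleArcs m) * (#(simpleArcs m) * (12 * Δ + 4 * Δ ^ 2)) := by
  set S := simpleArcs m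
  have hS (a : V × V) := card_simpleArcs_filter_clashes_le hΔ hsymm a
  have hsub : (doubleArcs m ×ˢ S ×ˢ S).filter (fun x => ¬ IsSwitching m (switchingTuple x)) ⊆
      (doubleArcs m ×ˢ S ×ˢ S).filter fun x =>
        Clashes m x.1 x.2.1 ∨ Clashes m x.1 x.2.2 ∨ Meets x.2.2 x.2.1 := by
    intro x hx
    simp only [mem_filter, mem_product, doubleArcs, simpleArcs, S, mem_univ, true_and] at hx ⊢
    exact ⟨hx.1, clashes_of_not_isSwitching m hsymm hloop hx.1.1 hx.1.2.1 hx.1.2.2 hx.2⟩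
  have hq := card_filter_product_le (doubleArcs m) (S ×ˢ S) (fun a y => Clashes m a y.1)
    ((4 * Δ + 2 * (Δ * Δ)) * #S) fun a _ => by
      rw [filter_product_left, card_product]
      exact Nat.mul_le_mul_right _ (hS a)
  have hr := card_filter_product_le (doubleArcs m) (S ×ˢ S) (fun a y => Clashes m a y.2)
    (#S * (4 * Δ + 2 * (Δ * Δ))) fun a _ => by
      rw [filter_product_right, card_product]
      exact Nat.mul_le_mul_left _ (hS a)
  have hqr := card_filter_product_le (doubleArcs m) (S ×ˢ S) (fun _ y => Meets y.2 y.1)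
    (#S * (4 * Δ)) fun _ _ =>
      card_filter_product_le S S (fun q r => Meets r q) (4 * Δ) fun q _ =>
        card_simpleArcs_filter_meets_le hΔ hsymm q
  have h₁ := card_filter_or_le (doubleArcs m ×ˢ S ×ˢ S) (fun x => Clashes m x.1 x.2.1)
    (fun x => Clashes m x.1 x.2.2 ∨ Meets x.2.2 x.2.1)
  have h₂ := card_filter_or_le (doubleArcs m ×ˢ S ×ˢ S) (fun x => Clashes m x.1 x.2.2)
    (fun x => Meets x.2.2 x.2.1)
  have := card_le_card hsub
  calc _ ≤ #(doubleArcs m) * ((4 * Δ + 2 * (Δ * Δ)) * #S) +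
        (#(doubleArcs m) * (#S * (4 * Δ + 2 * (Δ * Δ))) + #(doubleArcs m) * (#S * (4 * Δ))) := by
        omega
    _ = _ := by ring

lemma sum_mul_pred_le {ι : Type*} [Fintype ι] (d : ι → ℕ) {Δ : ℕ} (hΔ : ∀ i, d i ≤ Δ) :
    ((∑ i, d i * (d i - 1) : ℕ) : ℝ) ≤ ((Δ : ℝ) - 1) * ((∑ i, d i : ℕ) : ℝ) := by
  push_cast
  rw [mul_sum]
  refine sum_le_sum fun i _ => ?_
  rcases Nat.eq_zero_or_pos (d i) with h | h
  · simp [h]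
  · have : (d i : ℝ) ≤ Δ := by exact_mod_cast hΔ i
    rw [Nat.cast_sub h, Nat.cast_one]
    nlinarith

lemma le_sq_of_le_sq_div_sq {x a b c : ℝ} (hx : x ≤ a ^ 2 / b ^ 2) (ha : 0 ≤ a) (hb : 0 ≤ b)
    (habc : a ≤ c * b) : x ≤ c ^ 2 := by
  rcases hb.eq_or_lt with rfl | hb
  · simp only [ne_eq, OfNat.ofNat_ne_zero, not_false_eq_true, zero_pow, div_zero] at hx
    exact hx.trans (sq_nonneg c)
  · rw [← div_pow] at hx
    exact hx.trans (pow_le_pow_left₀ (div_nonneg ha hb.le) ((div_le_iff₀ hb).2 habc) 2)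

/-- Here `S + 4m` stands for `M`; the slack is `16mS((Δ - 1)² - m) + 8m²(12Δ² - 4Δ + 8 - 4m)`. -/
lemma lower_bound_of_card_bad_le {m S Δ f b : ℝ} (hm : 0 ≤ m) (hS : 0 ≤ S)
    (hmΔ : m ≤ (Δ - 1) ^ 2) (hfb : f + b = 2 * m * S ^ 2)
    (hb : b ≤ 2 * m * S * (12 * Δ + 4 * Δ ^ 2)) :
    2 * m * (S + 4 * m) ^ 2 * (1 - (12 * Δ ^ 2 - 4 * Δ + 8) / (S + 4 * m)) ≤ f := by
  have hdiv : (S + 4 * m) ^ 2 * ((12 * Δ ^ 2 - 4 * Δ + 8) / (S + 4 * m)) =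
      (S + 4 * m) * (12 * Δ ^ 2 - 4 * Δ + 8) := by
    rcases eq_or_ne (S + 4 * m) 0 with h | h
    · simp [h]
    · field_simp
  have h₁ : 0 ≤ m * S * ((Δ - 1) ^ 2 - m) := mul_nonneg (mul_nonneg hm hS) (by linarith)
  have h₂ : 0 ≤ m * m * (12 * Δ ^ 2 - 4 * Δ + 8 - 4 * m) :=
    mul_nonneg (mul_nonneg hm hm) (by nlinarith [sq_nonneg (2 * Δ + 1)])
  nlinarith

end DSwitching

open DSwitching

/-- **Bounds on the number `f_d(G)` of d-switchings applicable to `G`.**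
`G ∈ 𝒢_{0,m2}` (loopless) with `m2 ≤ M₂²/M²`.  `f_d(G)` is the number of
ordered 6-tuples `(v1,…,v6)` of distinct vertices with `v2v5` a double edge,
`v1v4`, `v3v6` simple edges, and `v1v2`, `v2v3`, `v4v5`, `v5v6` non-edges.
Then `2·m2·M²·(1 − (12Δ² − 4Δ + 8)/M) ≤ f_d(G) ≤ 2·m2·M²`. -/
theorem fd_bounds (n : ℕ) (d : Fin n → ℕ) (mG : Fin n → Fin n → ℕ)
    (M M2 Δ m2 : ℕ)
    (hM : M = ∑ i, d i)
    (hM2 : M2 = ∑ i, d i * (d i - 1))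
    (hΔ : Δ = Finset.univ.sup d)
    (hsymm : ∀ u v, mG u v = mG v u)
    (hdeg : ∀ v, (∑ u ∈ Finset.univ.filter (fun u => u ≠ v), mG v u)
        + 2 * mG v v = d v)
    (hloop : ∀ v, mG v v = 0)
    (hmul : ∀ u v, u ≠ v → mG u v ≤ 2)
    (hm2 : 2 * m2 = Set.ncard {q : Fin n × Fin n | q.1 ≠ q.2 ∧ mG q.1 q.2 = 2})
    (hm2le : (m2 : ℝ) ≤ (M2 : ℝ) ^ 2 / (M : ℝ) ^ 2)
    (fd : ℕ)
    (hfd : fd = Set.ncard {t : Fin 6 → Fin n | Function.Injective t ∧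
      mG (t 1) (t 4) = 2 ∧
      mG (t 0) (t 3) = 1 ∧ mG (t 2) (t 5) = 1 ∧
      mG (t 0) (t 1) = 0 ∧ mG (t 1) (t 2) = 0 ∧
      mG (t 3) (t 4) = 0 ∧ mG (t 4) (t 5) = 0}) :
    2 * (m2 : ℝ) * M ^ 2 * (1 - (12 * Δ ^ 2 - 4 * Δ + 8) / M) ≤ (fd : ℝ)
      ∧ fd ≤ 2 * m2 * M ^ 2 := by
  have hdegree (v : Fin n) : ∑ u, mG v u = d v := by
    rw [← hdeg v, hloop v, filter_ne', sum_erase _ (hloop v)]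
    simp
  have hdΔ (v : Fin n) : d v ≤ Δ := hΔ ▸ le_sup (mem_univ v)
  set S := simpleArcs mG
  have hD : #(doubleArcs mG) = 2 * m2 := hm2 ▸ card_doubleArcs mG hloop
  have hMS : M = #S + 4 * m2 := by
    rw [hM, ← sum_congr rfl fun v _ => hdegree v, sum_sum_eq_card_simpleArcs_add mG hloop hmul,
      hD]
    ring
  replace hfd : fd = {t | IsSwitching mG t}.ncard := hfd
  set bad := #((doubleArcs mG ×ˢ S ×ˢ S).filter fun x => ¬ IsSwitching mG (switchingTuple x))
  have hsplit := card_filter_add_card_filter_not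
    (s := doubleArcs mG ×ˢ S ×ˢ S) (fun x => IsSwitching mG (switchingTuple x))
  rw [← ncard_setOf_isSwitching, ← hfd, card_product, card_product, hD] at hsplit
  have hbad :=
    card_filter_not_isSwitching_le mG (fun v => (hdegree v).trans_le (hdΔ v)) hsymm hloop
  rw [hD] at hbad
  have hm2Δ : (m2 : ℝ) ≤ ((Δ : ℝ) - 1) ^ 2 :=
    le_sq_of_le_sq_div_sq hm2le (Nat.cast_nonneg _) (Nat.cast_nonneg _)
      (hM2 ▸ hM ▸ sum_mul_pred_le d hdΔ)
  constructor
  · rw [hMS]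
    push_cast
    exact lower_bound_of_card_bad_le (b := bad) (Nat.cast_nonneg _) (Nat.cast_nonneg _) hm2Δ
      (by rw [sq]; exact_mod_cast hsplit) (by rw [mul_assoc]; exact_mod_cast hbad)
  · have hSM : #S ≤ M := by omega
    calc fd ≤ 2 * m2 * (#S * #S) := by omega
      _ ≤ 2 * m2 * M ^ 2 := by rw [sq]; gcongr
end

section
/- Let G ∈ 𝒢_{m1,m2} (no restriction on the sizes of m1 and m2). Let b_ℓ(G,∅) denote the number of simple ordered 2-paths (u,v,w) of G such that there is no loop at v. Then b_ℓ(G,∅) ≥ M_2 − m1·Δ·(Δ−1) − 4·m2·(2Δ−3). -/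
open Finset

/-- **Unconditional lower bound on `b_ℓ(G, ∅)`.**
`G ∈ 𝒢_{m1,m2}` (no restriction on `m1`, `m2`).  `b_ℓ(G,∅)` is the number of
simple ordered 2-paths `(u,v,w)` of `G` with no loop at `v`.  Then
`b_ℓ(G,∅) ≥ M₂ − m1·Δ·(Δ−1) − 4·m2·(2Δ−3)`. -/
theorem bl_empty_lower (n : ℕ) (d : Fin n → ℕ) (mG : Fin n → Fin n → ℕ)
    (M M2 Δ m1 m2 : ℕ)
    (hM : M = ∑ i, d i)
    (hM2 : M2 = ∑ i, d i * (d i - 1))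
    (hΔ : Δ = Finset.univ.sup d)
    (hsymm : ∀ u v, mG u v = mG v u)
    (hdeg : ∀ v, (∑ u ∈ Finset.univ.filter (fun u => u ≠ v), mG v u)
        + 2 * mG v v = d v)
    (hloop : ∀ v, mG v v ≤ 1)
    (hmul : ∀ u v, u ≠ v → mG u v ≤ 2)
    (hm1 : m1 = ∑ v, mG v v)
    (hm2 : 2 * m2 = Set.ncard {q : Fin n × Fin n | q.1 ≠ q.2 ∧ mG q.1 q.2 = 2})
    (bl0 : ℕ)
    (hbl0 : bl0 = Set.ncard {t : Fin n × Fin n × Fin n |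
      t.1 ≠ t.2.1 ∧ t.1 ≠ t.2.2 ∧ t.2.1 ≠ t.2.2 ∧
      mG t.1 t.2.1 = 1 ∧ mG t.2.1 t.2.2 = 1 ∧ mG t.2.1 t.2.1 = 0}) :
    (M2 : ℝ) - m1 * Δ * (Δ - 1) - 4 * m2 * (2 * Δ - 3) ≤ (bl0 : ℝ) := by
  classical
  set s : Fin n → ℕ := fun v => (univ.filter fun u => u ≠ v ∧ mG v u = 1).card with hs
  set t : Fin n → ℕ := fun v => (univ.filter fun u => u ≠ v ∧ mG v u = 2).card with ht
  -- degree decomposition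
  have hdecomp : ∀ v, d v = s v + 2 * t v + 2 * mG v v := by
    intro v
    have key : ∀ u ∈ univ.filter (fun u => u ≠ v), mG v u
        = (if u ≠ v ∧ mG v u = 1 then 1 else 0)
          + 2 * (if u ≠ v ∧ mG v u = 2 then 1 else 0) := by
      intro u hu
      simp only [mem_filter, mem_univ, true_and] at hu
      have h2 : mG v u ≤ 2 := hmul v u hu.symm
      split_ifs with h h' h' <;> omega
    have h1 : ∑ u ∈ univ.filter (fun u => u ≠ v), mG v u = s v + 2 * t v := by
      rw [Finset.sum_congr rfl key, Finset.sum_add_distrib, ← Finset.mul_sum,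
        ← Finset.card_filter, ← Finset.card_filter]
      simp [hs, ht, Finset.filter_filter]
    have := hdeg v
    omega
  -- upper bound on degrees
  have hdΔ : ∀ v, d v ≤ Δ := fun v => hΔ ▸ Finset.le_sup (mem_univ v)
  -- counting double edges per vertex
  have hm2' : 2 * m2 = ∑ v, t v := by
    have hset : {q : Fin n × Fin n | q.1 ≠ q.2 ∧ mG q.1 q.2 = 2}
        = ↑(univ.filter fun q : Fin n × Fin n => q.1 ≠ q.2 ∧ mG q.1 q.2 = 2) := by
      ext q; simp
    rw [hm2, hset, Set.ncard_coe_finset,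
      Finset.card_eq_sum_card_fiberwise (f := fun q => q.2) (t := univ) (fun x _ => mem_univ _)]
    refine Finset.sum_congr rfl fun v _ => ?_
    refine Finset.card_bij' (fun q _ => q.1) (fun u _ => (u, v)) ?_ ?_ ?_ ?_
    · intro q hq
      simp only [mem_filter, mem_univ, true_and] at hq ⊢
      obtain ⟨⟨h1, h2⟩, h3⟩ := hq
      subst h3
      exact ⟨h1, by rw [hsymm]; exact h2⟩
    · intro u hu
      simp only [mem_filter, mem_univ, true_and, and_true] at hu ⊢
      exact ⟨hu.1, by rw [hsymm]; exact hu.2⟩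
    · intro q hq
      simp only [mem_filter, mem_univ, true_and] at hq
      exact Prod.ext rfl hq.2.symm
    · intro u hu; rfl
  -- counting 2-paths per center
  have hbl : bl0 = ∑ v, (if mG v v = 0 then s v * s v - s v else 0) := by
    have hset : {t : Fin n × Fin n × Fin n |
        t.1 ≠ t.2.1 ∧ t.1 ≠ t.2.2 ∧ t.2.1 ≠ t.2.2 ∧
        mG t.1 t.2.1 = 1 ∧ mG t.2.1 t.2.2 = 1 ∧ mG t.2.1 t.2.1 = 0}
        = ↑(univ.filter fun t : Fin n × Fin n × Fin n =>
          t.1 ≠ t.2.1 ∧ t.1 ≠ t.2.2 ∧ t.2.1 ≠ t.2.2 ∧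
          mG t.1 t.2.1 = 1 ∧ mG t.2.1 t.2.2 = 1 ∧ mG t.2.1 t.2.1 = 0) := by
      ext q; simp
    rw [hbl0, hset, Set.ncard_coe_finset,
      Finset.card_eq_sum_card_fiberwise (f := fun t => t.2.1) (t := univ) (fun x _ => mem_univ _)]
    refine Finset.sum_congr rfl fun v _ => ?_
    by_cases hv : mG v v = 0
    · rw [if_pos hv, ← Finset.offDiag_card]
      refine Finset.card_bij' (fun q _ => (q.1, q.2.2)) (fun p _ => (p.1, v, p.2)) ?_ ?_ ?_ ?_
      · intro q hq
        simp only [mem_filter, mem_univ, true_and] at hq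
        obtain ⟨⟨h1, h2, h3, h4, h5, h6⟩, h7⟩ := hq
        subst h7
        simp only [Finset.mem_offDiag, mem_filter, mem_univ, true_and]
        exact ⟨⟨h1, by rw [hsymm]; exact h4⟩, ⟨Ne.symm h3, h5⟩, h2⟩
      · intro p hp
        simp only [Finset.mem_offDiag, mem_filter, mem_univ, true_and, and_true] at hp ⊢
        obtain ⟨⟨h1, h2⟩, ⟨h3, h4⟩, h5⟩ := hp
        exact ⟨h1, h5, fun h => h3 h.symm, by rw [hsymm]; exact h2, h4, hv⟩
      · intro q hq
        simp only [mem_filter, mem_univ, true_and] at hq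
        exact Prod.ext rfl (Prod.ext hq.2.symm rfl)
      · intro p hp; rfl
    · rw [if_neg hv]
      rw [Finset.card_eq_zero, Finset.filter_eq_empty_iff]
      intro q hq
      simp only [mem_filter, mem_univ, true_and] at hq
      intro h
      exact hv (h ▸ hq.2.2.2.2.2)
  -- pointwise real inequality
  have hsq : ∀ k : ℕ, k * (k - 1) = k * k - k := fun k => by
    rw [Nat.mul_sub, mul_one]
  have hpt : ∀ v, ((d v * (d v - 1) : ℕ) : ℝ)
      ≤ (if mG v v = 0 then ((s v * s v - s v : ℕ) : ℝ) else 0)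
        + (mG v v : ℝ) * ((Δ : ℝ) * ((Δ : ℝ) - 1))
        + (t v : ℝ) * (2 * (2 * (Δ : ℝ) - 3)) := by
    intro v
    have hd := hdecomp v
    have hdle := hdΔ v
    have hl := hloop v
    have hsle : s v ≤ s v * s v := by
      rcases Nat.eq_zero_or_pos (s v) with h | h
      · simp [h]
      · exact Nat.le_mul_of_pos_left _ h
    by_cases hv : mG v v = 0
    · rw [if_pos hv]
      rcases Nat.eq_zero_or_pos (t v) with h0 | h0
      · -- t = 0 : exact equality
        have hds : d v = s v := by omega
        have e : d v * (d v - 1) = s v * s v - s v := by rw [hds, hsq]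
        rw [e, hv, h0]
        push_cast
        simp
      · -- t ≥ 1
        have hd2 : 2 ≤ d v := by omega
        have hΔ2 : 2 ≤ Δ := le_trans hd2 hdle
        have c1 : ((d v * (d v - 1) : ℕ) : ℝ) = (d v : ℝ) * ((d v : ℝ) - 1) := by
          rw [Nat.cast_mul, Nat.cast_sub (by omega), Nat.cast_one]
        have c2 : ((s v * s v - s v : ℕ) : ℝ) = (s v : ℝ) * (s v : ℝ) - (s v : ℝ) := by
          rw [Nat.cast_sub hsle, Nat.cast_mul]
        have cd : (d v : ℝ) = (s v : ℝ) + 2 * (t v : ℝ) := by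
          rw [hd, hv]; push_cast; ring
        have cΔ : (d v : ℝ) ≤ (Δ : ℝ) := Nat.cast_le.2 hdle
        have ct1 : (1:ℝ) ≤ (t v : ℝ) := by exact_mod_cast h0
        have hkey : (0:ℝ) ≤ 4 * (t v : ℝ) * ((Δ:ℝ) - 1 - (s v : ℝ) - (t v : ℝ)) := by
          apply mul_nonneg (by linarith)
          nlinarith [cd, cΔ, ct1]
        rw [c1, c2, hv, cd]
        push_cast
        nlinarith [hkey]
    · -- loop at v
      rw [if_neg hv]
      have hv1 : mG v v = 1 := by omega
      have hd2 : 2 ≤ d v := by rw [hd, hv1]; omega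
      have hΔ2 : 2 ≤ Δ := le_trans hd2 hdle
      have c1 : ((d v * (d v - 1) : ℕ) : ℝ) = (d v : ℝ) * ((d v : ℝ) - 1) := by
        rw [Nat.cast_mul, Nat.cast_sub (by omega), Nat.cast_one]
      have cΔ : (d v : ℝ) ≤ (Δ : ℝ) := Nat.cast_le.2 hdle
      have cd2 : (2:ℝ) ≤ (d v : ℝ) := by exact_mod_cast hd2
      have cΔ2 : (2:ℝ) ≤ (Δ : ℝ) := by exact_mod_cast hΔ2
      have ht0 : (0:ℝ) ≤ (t v : ℝ) := Nat.cast_nonneg _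
      rw [c1, hv1]
      push_cast
      nlinarith [mul_nonneg ht0 (show (0:ℝ) ≤ 2 * (2 * (Δ:ℝ) - 3) by linarith),
        mul_nonneg (show (0:ℝ) ≤ (Δ:ℝ) - (d v : ℝ) by linarith)
          (show (0:ℝ) ≤ (Δ:ℝ) + (d v : ℝ) - 1 by linarith)]
  -- assemble
  have hM2R : (M2 : ℝ) = ∑ v, ((d v * (d v - 1) : ℕ) : ℝ) := by
    rw [hM2, Nat.cast_sum]
  have hblR : (bl0 : ℝ) = ∑ v, (if mG v v = 0 then ((s v * s v - s v : ℕ) : ℝ) else 0) := by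
    rw [hbl, Nat.cast_sum]
    exact Finset.sum_congr rfl fun v _ => by split_ifs <;> simp
  have hm1R : (m1 : ℝ) = ∑ v, (mG v v : ℝ) := by rw [hm1, Nat.cast_sum]
  have hm2R : 2 * (m2 : ℝ) = ∑ v, (t v : ℝ) := by
    rw [show (2:ℝ) * (m2:ℝ) = ((2 * m2 : ℕ) : ℝ) by push_cast; ring, hm2', Nat.cast_sum]
  have key : (M2 : ℝ) ≤ (bl0 : ℝ) + (m1 : ℝ) * ((Δ : ℝ) * ((Δ : ℝ) - 1))
      + (2 * (m2 : ℝ)) * (2 * (2 * (Δ : ℝ) - 3)) := by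
    calc (M2 : ℝ) = ∑ v, ((d v * (d v - 1) : ℕ) : ℝ) := hM2R
      _ ≤ ∑ v, ((if mG v v = 0 then ((s v * s v - s v : ℕ) : ℝ) else 0)
            + (mG v v : ℝ) * ((Δ : ℝ) * ((Δ : ℝ) - 1))
            + (t v : ℝ) * (2 * (2 * (Δ : ℝ) - 3))) :=
        Finset.sum_le_sum fun v _ => hpt v
      _ = (∑ v, (if mG v v = 0 then ((s v * s v - s v : ℕ) : ℝ) else 0))
            + (∑ v, (mG v v : ℝ)) * ((Δ : ℝ) * ((Δ : ℝ) - 1))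
            + (∑ v, (t v : ℝ)) * (2 * (2 * (Δ : ℝ) - 3)) := by
        rw [Finset.sum_add_distrib, Finset.sum_add_distrib, Finset.sum_mul, Finset.sum_mul]
      _ = (bl0 : ℝ) + (m1 : ℝ) * ((Δ : ℝ) * ((Δ : ℝ) - 1))
            + (2 * (m2 : ℝ)) * (2 * (2 * (Δ : ℝ) - 3)) := by
        rw [← hblR, ← hm1R, ← hm2R]
  linarith [key]
end

section
/- Let G ∈ 𝒢_{m1,m2} (no restriction on the sizes of m1 and m2). For a simple ordered 2-path (v1,v2,v3) of G, let b_ℓ(G,(v1,v2,v3)) denote the number of ordered pairs (u,w) of vertices such that uw is a simple edge, u,w ∉ {v1,v2,v3}, and v1u and v3w are non-edges. Then for every simple ordered 2-path (v1,v2,v3) of G, b_ℓ(G,(v1,v2,v3)) ≥ M − 4·m2 − 2·m1 − 2Δ² − 2Δ + 2. -/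
open Finset

/-- **Unconditional lower bound on `b_ℓ(G, (v1,v2,v3))`.**
`G ∈ 𝒢_{m1,m2}` (no restriction on `m1`, `m2`).  For a simple ordered 2-path
`(v1,v2,v3)` of `G`, `b_ℓ(G,(v1,v2,v3))` is the number of ordered pairs
`(u,w)` with `uw` a simple edge, `u, w ∉ {v1,v2,v3}`, and `v1u`, `v3w`
non-edges.  Then `b_ℓ(G,(v1,v2,v3)) ≥ M − 4·m2 − 2·m1 − 2Δ² − 2Δ + 2`. -/
theorem bl_path_lower (n : ℕ) (d : Fin n → ℕ) (mG : Fin n → Fin n → ℕ)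
    (M M2 Δ m1 m2 : ℕ)
    (hM : M = ∑ i, d i)
    (hM2 : M2 = ∑ i, d i * (d i - 1))
    (hΔ : Δ = Finset.univ.sup d)
    (hsymm : ∀ u v, mG u v = mG v u)
    (hdeg : ∀ v, (∑ u ∈ Finset.univ.filter (fun u => u ≠ v), mG v u)
        + 2 * mG v v = d v)
    (hloop : ∀ v, mG v v ≤ 1)
    (hmul : ∀ u v, u ≠ v → mG u v ≤ 2)
    (hm1 : m1 = ∑ v, mG v v)
    (hm2 : 2 * m2 = Set.ncard {q : Fin n × Fin n | q.1 ≠ q.2 ∧ mG q.1 q.2 = 2})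
    (v1 v2 v3 : Fin n)
    (hdist : v1 ≠ v2 ∧ v1 ≠ v3 ∧ v2 ≠ v3)
    (hpath : mG v1 v2 = 1 ∧ mG v2 v3 = 1)
    (bl1 : ℕ)
    (hbl1 : bl1 = Set.ncard {q : Fin n × Fin n |
      q.1 ≠ q.2 ∧ mG q.1 q.2 = 1 ∧
      q.1 ≠ v1 ∧ q.1 ≠ v2 ∧ q.1 ≠ v3 ∧ q.2 ≠ v1 ∧ q.2 ≠ v2 ∧ q.2 ≠ v3 ∧
      mG v1 q.1 = 0 ∧ mG v3 q.2 = 0}) :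
    (M : ℝ) - 4 * m2 - 2 * m1 - 2 * Δ ^ 2 - 2 * Δ + 2 ≤ (bl1 : ℝ) := by
  obtain ⟨h12, h13, h23⟩ := hdist
  obtain ⟨hp12, hp23⟩ := hpath
  classical
  set Sset : Finset (Fin n × Fin n) :=
    univ.filter (fun q => q.1 ≠ q.2 ∧ mG q.1 q.2 = 1) with hSset
  set Dset : Finset (Fin n × Fin n) :=
    univ.filter (fun q => q.1 ≠ q.2 ∧ mG q.1 q.2 = 2) with hDset
  set A : Finset (Fin n × Fin n) :=
    univ.filter (fun q => q.1 ≠ q.2 ∧ mG q.1 q.2 = 1 ∧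
      q.1 ≠ v1 ∧ q.1 ≠ v2 ∧ q.1 ≠ v3 ∧ q.2 ≠ v1 ∧ q.2 ≠ v2 ∧ q.2 ≠ v3 ∧
      mG v1 q.1 = 0 ∧ mG v3 q.2 = 0) with hA
  set Bu : Finset (Fin n × Fin n) :=
    Sset.filter (fun q => q.1 = v1 ∨ mG v1 q.1 ≠ 0) with hBudef
  set Bw : Finset (Fin n × Fin n) :=
    Sset.filter (fun q => q.2 = v3 ∨ mG v3 q.2 ≠ 0) with hBwdef
  -- bl1 = |A|
  have hbl1' : bl1 = A.card := by
    rw [hbl1, ← Set.ncard_coe_finset A]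
    congr 1
    ext q
    simp [hA]
  -- 2*m2 = |Dset|
  have hm2' : 2 * m2 = Dset.card := by
    rw [hm2, ← Set.ncard_coe_finset Dset]
    congr 1
    ext q
    simp [hDset]
  have hdΔ : ∀ v, d v ≤ Δ := fun v => hΔ ▸ Finset.le_sup (mem_univ v)
  have hsum_le : ∀ v, (∑ u ∈ Finset.univ.filter (fun u => u ≠ v), mG v u) ≤ d v := by
    intro v; have := hdeg v; omega
  -- simple degree bound
  have hsdeg : ∀ u, (univ.filter (fun w => w ≠ u ∧ mG u w = 1)).card ≤ Δ := by
    intro u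
    calc (univ.filter (fun w => w ≠ u ∧ mG u w = 1)).card
        = ∑ w ∈ univ.filter (fun w => w ≠ u ∧ mG u w = 1), 1 := by
          simp
      _ ≤ ∑ w ∈ univ.filter (fun w => w ≠ u ∧ mG u w = 1), mG u w :=
          Finset.sum_le_sum (fun w hw => by
            simp only [mem_filter] at hw; omega)
      _ ≤ ∑ w ∈ Finset.univ.filter (fun w => w ≠ u), mG u w :=
          Finset.sum_le_sum_of_subset (by
            intro w hw; simp only [mem_filter] at hw ⊢; exact ⟨hw.1, hw.2.1⟩)
      _ ≤ d u := hsum_le u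
      _ ≤ Δ := hdΔ u
  -- neighborhood size bound
  have hNcard : ∀ x, (univ.filter (fun u => u ≠ x ∧ mG x u ≠ 0)).card ≤ Δ := by
    intro x
    calc (univ.filter (fun u => u ≠ x ∧ mG x u ≠ 0)).card
        = ∑ u ∈ univ.filter (fun u => u ≠ x ∧ mG x u ≠ 0), 1 := by simp
      _ ≤ ∑ u ∈ univ.filter (fun u => u ≠ x ∧ mG x u ≠ 0), mG x u :=
          Finset.sum_le_sum (fun u hu => by
            simp only [mem_filter] at hu; omega)
      _ ≤ ∑ u ∈ Finset.univ.filter (fun u => u ≠ x), mG x u :=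
          Finset.sum_le_sum_of_subset (by
            intro u hu; simp only [mem_filter] at hu ⊢; exact ⟨hu.1, hu.2.1⟩)
      _ ≤ d x := hsum_le x
      _ ≤ Δ := hdΔ x
  -- M = |Sset| + 2|Dset| + 2 m1
  have hMeq : M = Sset.card + 2 * Dset.card + 2 * m1 := by
    have h1 : M = (∑ v, ∑ u ∈ Finset.univ.filter (fun u => u ≠ v), mG v u) + 2 * m1 := by
      rw [hM, hm1, Finset.mul_sum, ← Finset.sum_add_distrib]
      exact Finset.sum_congr rfl (fun v _ => (hdeg v).symm)
    have h2 : (∑ v, ∑ u ∈ Finset.univ.filter (fun u => u ≠ v), mG v u)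
        = ∑ q ∈ univ.filter (fun q : Fin n × Fin n => q.1 ≠ q.2), mG q.1 q.2 := by
      rw [Finset.sum_filter, Fintype.sum_prod_type]
      refine Finset.sum_congr rfl (fun v _ => ?_)
      rw [Finset.sum_filter]
      exact Finset.sum_congr rfl (fun u _ => if_congr ne_comm rfl rfl)
    have h3 : ∑ q ∈ univ.filter (fun q : Fin n × Fin n => q.1 ≠ q.2), mG q.1 q.2
        = Sset.card + 2 * Dset.card := by
      have hsplit : ∀ q ∈ univ.filter (fun q : Fin n × Fin n => q.1 ≠ q.2),
          mG q.1 q.2 = (if mG q.1 q.2 = 1 then 1 else 0)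
            + 2 * (if mG q.1 q.2 = 2 then 1 else 0) := by
        intro q hq
        simp only [mem_filter] at hq
        have := hmul q.1 q.2 hq.2
        split_ifs <;> omega
      rw [Finset.sum_congr rfl hsplit, Finset.sum_add_distrib, ← Finset.mul_sum]
      have e1 : ∑ q ∈ univ.filter (fun q : Fin n × Fin n => q.1 ≠ q.2),
          (if mG q.1 q.2 = 1 then 1 else 0) = Sset.card := by
        rw [← Finset.sum_filter, Finset.filter_filter, hSset]
        simp
      have e2 : ∑ q ∈ univ.filter (fun q : Fin n × Fin n => q.1 ≠ q.2),
          (if mG q.1 q.2 = 2 then 1 else 0) = Dset.card := by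
        rw [← Finset.sum_filter, Finset.filter_filter, hDset]
        simp
      rw [e1, e2]
    rw [h1, h2, h3]
  -- A ⊆ Sset
  have hAS : A ⊆ Sset := by
    intro q hq
    rw [hA, mem_filter] at hq
    rw [hSset, mem_filter]
    exact ⟨hq.1, hq.2.1, hq.2.2.1⟩
  -- coverage of bad pairs
  have hcover : Sset \ A ⊆ Bu ∪ Bw := by
    intro q hq
    rw [mem_sdiff] at hq
    obtain ⟨hqS, hqA⟩ := hq
    have hmem := (mem_filter.mp hqS).2
    rw [mem_union]
    by_cases hu : q.1 = v1 ∨ mG v1 q.1 ≠ 0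
    · exact Or.inl (by rw [hBudef, mem_filter]; exact ⟨hqS, hu⟩)
    by_cases hw : q.2 = v3 ∨ mG v3 q.2 ≠ 0
    · exact Or.inr (by rw [hBwdef, mem_filter]; exact ⟨hqS, hw⟩)
    push_neg at hu hw
    exfalso
    apply hqA
    rw [hA, mem_filter]
    refine ⟨mem_univ _, hmem.1, hmem.2, hu.1, ?_, ?_, ?_, ?_, hw.1, hu.2, hw.2⟩
    · intro h; rw [h] at hu; omega
    · intro h; rw [h] at hmem; omega
    · intro h; rw [h] at hmem; have hs := hsymm q.1 v1; omega
    · intro h; rw [h] at hw; have hs := hsymm v2 v3; omega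
  -- |Bu| ≤ (Δ+1)*Δ
  have hBu : Bu.card ≤ (Δ + 1) * Δ := by
    set N1 : Finset (Fin n) := univ.filter (fun u => u ≠ v1 ∧ mG v1 u ≠ 0) with hN1def
    have hsub : Bu ⊆ (insert v1 N1).biUnion
        (fun u => (univ.filter (fun w => w ≠ u ∧ mG u w = 1)).image (fun w => (u, w))) := by
      intro q hq
      rw [hBudef, mem_filter] at hq
      obtain ⟨hqS, hcond⟩ := hq
      have hS := (mem_filter.mp hqS).2
      rw [mem_biUnion]
      refine ⟨q.1, ?_, ?_⟩
      · rw [mem_insert]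
        rcases hcond with h | h
        · exact Or.inl h
        · by_cases h1 : q.1 = v1
          · exact Or.inl h1
          · exact Or.inr (by rw [hN1def, mem_filter]; exact ⟨mem_univ _, h1, h⟩)
      · rw [mem_image]
        exact ⟨q.2, mem_filter.mpr ⟨mem_univ _, Ne.symm hS.1, hS.2⟩, by simp⟩
    calc Bu.card ≤ ∑ u ∈ insert v1 N1,
          ((univ.filter (fun w => w ≠ u ∧ mG u w = 1)).image (fun w => (u, w))).card :=
        le_trans (card_le_card hsub) (card_biUnion_le)
      _ ≤ ∑ _u ∈ insert v1 N1, Δ :=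
          Finset.sum_le_sum (fun u _ => le_trans card_image_le (hsdeg u))
      _ = (insert v1 N1).card * Δ := by rw [Finset.sum_const, smul_eq_mul]
      _ ≤ (Δ + 1) * Δ := by
          have h1 := Finset.card_insert_le v1 N1
          have h2 := hNcard v1
          exact Nat.mul_le_mul_right _ (by rw [hN1def] at *; omega)
  -- |Bw| ≤ (Δ+1)*Δ
  have hBw : Bw.card ≤ (Δ + 1) * Δ := by
    set N3 : Finset (Fin n) := univ.filter (fun u => u ≠ v3 ∧ mG v3 u ≠ 0) with hN3def
    have hsub : Bw ⊆ (insert v3 N3).biUnion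
        (fun w => (univ.filter (fun u => u ≠ w ∧ mG w u = 1)).image (fun u => (u, w))) := by
      intro q hq
      rw [hBwdef, mem_filter] at hq
      obtain ⟨hqS, hcond⟩ := hq
      have hS := (mem_filter.mp hqS).2
      rw [mem_biUnion]
      refine ⟨q.2, ?_, ?_⟩
      · rw [mem_insert]
        rcases hcond with h | h
        · exact Or.inl h
        · by_cases h1 : q.2 = v3
          · exact Or.inl h1
          · exact Or.inr (by rw [hN3def, mem_filter]; exact ⟨mem_univ _, h1, h⟩)
      · rw [mem_image]
        refine ⟨q.1, mem_filter.mpr ⟨mem_univ _, hS.1, ?_⟩, by simp⟩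
        rw [hsymm q.2 q.1]; exact hS.2
    calc Bw.card ≤ ∑ w ∈ insert v3 N3,
          ((univ.filter (fun u => u ≠ w ∧ mG w u = 1)).image (fun u => (u, w))).card :=
        le_trans (card_le_card hsub) (card_biUnion_le)
      _ ≤ ∑ _w ∈ insert v3 N3, Δ :=
          Finset.sum_le_sum (fun w _ => le_trans card_image_le (hsdeg w))
      _ = (insert v3 N3).card * Δ := by rw [Finset.sum_const, smul_eq_mul]
      _ ≤ (Δ + 1) * Δ := by
          have h1 := Finset.card_insert_le v3 N3
          have h2 := hNcard v3
          exact Nat.mul_le_mul_right _ (by rw [hN3def] at *; omega)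
  -- overlap has at least 2 elements
  have hpairne : ((v1, v2) : Fin n × Fin n) ≠ (v2, v3) := by
    intro h
    exact h12 (congrArg Prod.fst h)
  have hover2 : 2 ≤ (Bu ∩ Bw).card := by
    have hsub : ({(v1, v2), (v2, v3)} : Finset (Fin n × Fin n)) ⊆ Bu ∩ Bw := by
      intro q hq
      simp only [mem_insert, mem_singleton] at hq
      rw [mem_inter]
      have hs23 := hsymm v2 v3
      rcases hq with rfl | rfl
      · constructor
        · rw [hBudef, mem_filter]
          exact ⟨by rw [hSset, mem_filter]; exact ⟨mem_univ _, h12, hp12⟩, Or.inl rfl⟩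
        · rw [hBwdef, mem_filter]
          exact ⟨by rw [hSset, mem_filter]; exact ⟨mem_univ _, h12, hp12⟩, Or.inr (by show mG v3 v2 ≠ 0; omega)⟩
      · constructor
        · rw [hBudef, mem_filter]
          exact ⟨by rw [hSset, mem_filter]; exact ⟨mem_univ _, h23, hp23⟩, Or.inr (by show mG v1 v2 ≠ 0; omega)⟩
        · rw [hBwdef, mem_filter]
          exact ⟨by rw [hSset, mem_filter]; exact ⟨mem_univ _, h23, hp23⟩, Or.inl rfl⟩
    calc 2 = ({(v1, v2), (v2, v3)} : Finset (Fin n × Fin n)).card :=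
        (Finset.card_pair hpairne).symm
      _ ≤ (Bu ∩ Bw).card := card_le_card hsub
  -- put it together
  have hkey1 : Sset.card = A.card + (Sset \ A).card := by
    have := Finset.card_sdiff_add_card_eq_card hAS
    omega
  have hkey2 : (Sset \ A).card + 2 ≤ 2 * ((Δ + 1) * Δ) := by
    have h1 : (Sset \ A).card ≤ (Bu ∪ Bw).card := card_le_card hcover
    have h2 : (Bu ∪ Bw).card + (Bu ∩ Bw).card = Bu.card + Bw.card :=
      Finset.card_union_add_card_inter _ _
    omega
  have hfin : M = A.card + (Sset \ A).card + 4 * m2 + 2 * m1 := by omega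
  rw [hbl1']
  have c1 : (M : ℝ) = (A.card : ℝ) + ((Sset \ A).card : ℝ) + 4 * m2 + 2 * m1 := by
    exact_mod_cast congrArg (Nat.cast (R := ℝ)) hfin
  have c2 : ((Sset \ A).card : ℝ) + 2 ≤ 2 * (((Δ : ℝ) + 1) * Δ) := by
    exact_mod_cast hkey2
  have c3 : (((Δ : ℝ)) + 1) * Δ = (Δ : ℝ) ^ 2 + Δ := by ring
  linarith
end

section
/- Let G ∈ 𝒢_{m1,m2} (no restriction on the sizes of m1 and m2). Let f_ℓ(G) denote the number of ordered 5-tuples (v1,v2,v3,v4,v5) of distinct vertices of G such that there is a loop at v2, v1v4 and v3v5 are simple edges, and v1v2, v2v3 and v4v5 are non-edges. Then f_ℓ(G) ≥ m1·M·( M − 4·m1 − 8·m2 − 8Δ − 3Δ² ). -/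
/-!
Let `L` be the set of loop vertices and `E` the set of ordered simple edges, so that
`M = |E| + 4 m2 + 2 m1`. A triple `(v, (a, b), (c, e)) ∈ L × E × E` yields the ℓ-switching
`(a, v, c, b, e)` unless an arc meets `v` or starts in a neighbour of `v`, or the arcs share a
vertex, or `e` is adjacent to `b`. As all degrees are at most `Δ`, for each `v` at most
`|E| (8Δ + 3Δ²)` pairs of arcs fail, so `f_ℓ ≥ m1 |E| (|E| − 8Δ − 3Δ²)`, which dominates the
claimed bound after substituting `|E| = M − 4 m2 − 2 m1`.
-/

open Finset

lemma Finset.card_filter_product_le {α β : Type*} (A : Finset α) (B : Finset β)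
    (p : α → β → Prop) [∀ a, DecidablePred (p a)] (k : ℕ)
    (h : ∀ a ∈ A, #(B.filter (p a)) ≤ k) :
    #((A ×ˢ B).filter fun x => p x.1 x.2) ≤ #A * k := by
  calc #((A ×ˢ B).filter fun x => p x.1 x.2) = ∑ a ∈ A, #(B.filter (p a)) := by
        simp only [card_filter, sum_product]
    _ ≤ #A * k := sum_le_card_nsmul _ _ _ h

lemma Finset.card_filter_mem_le {α β : Type*} [DecidableEq α] [DecidableEq β] (E : Finset α)
    (g : α → β) (s : Finset β) (k : ℕ) (h : ∀ b ∈ s, #(E.filter (g · = b)) ≤ k) :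
    #(E.filter (g · ∈ s)) ≤ #s * k := by
  refine (card_le_card fun a ha => ?_).trans (card_biUnion_le_card_mul s _ k h)
  simp only [mem_filter, mem_biUnion] at ha ⊢
  exact ⟨g a, ha.2, ha.1, rfl⟩

section Multigraph

variable {V : Type*} [Fintype V] (m : V → V → ℕ)

def loopVertices : Finset V := univ.filter fun v => m v v ≠ 0

lemma sum_diag_eq_card_loopVertices (hloop : ∀ v, m v v ≤ 1) :
    ∑ v, m v v = #(loopVertices m) := by
  rw [loopVertices, card_filter]
  exact sum_congr rfl fun v _ => by have := hloop v; split_ifs <;> omega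

variable [DecidableEq V]

def neighbors (v : V) : Finset V := univ.filter fun u => u ≠ v ∧ m v u ≠ 0

def simpleArcs : Finset (V × V) := univ.filter fun p => p.1 ≠ p.2 ∧ m p.1 p.2 = 1

def doubleArcs : Finset (V × V) := univ.filter fun p => p.1 ≠ p.2 ∧ m p.1 p.2 = 2

lemma card_neighbors_le_sum (v : V) :
    #(neighbors m v) ≤ ∑ u ∈ univ.filter (· ≠ v), m v u :=
  calc #(neighbors m v) = ∑ _ ∈ neighbors m v, 1 := card_eq_sum_ones _
    _ ≤ ∑ u ∈ neighbors m v, m v u :=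
        sum_le_sum fun _ hu => Nat.one_le_iff_ne_zero.mpr (mem_filter.mp hu).2.2
    _ ≤ ∑ u ∈ univ.filter (· ≠ v), m v u :=
        sum_le_sum_of_subset fun u hu => mem_filter.mpr ⟨mem_univ u, (mem_filter.mp hu).2.1⟩

lemma sum_offDiag_eq_card_simpleArcs_add_card_doubleArcs
    (hmul : ∀ u v, u ≠ v → m u v ≤ 2) :
    ∑ v, ∑ u ∈ univ.filter (· ≠ v), m v u = #(simpleArcs m) + 2 * #(doubleArcs m) := by
  rw [simpleArcs, doubleArcs, card_filter, card_filter, mul_sum, ← sum_add_distrib,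
    ← univ_product_univ, sum_product]
  refine sum_congr rfl fun v _ => ?_
  rw [sum_filter]
  refine sum_congr rfl fun u _ => ?_
  by_cases h : u = v
  · simp [h]
  · have := hmul v u (Ne.symm h)
    simp only [if_pos h, ne_eq, Ne.symm h, not_false_eq_true, true_and]
    split_ifs <;> omega

lemma card_filter_fst_simpleArcs_le (v : V) :
    #((simpleArcs m).filter (·.1 = v)) ≤ #(neighbors m v) := by
  refine card_le_card_of_injOn Prod.snd (fun e he => ?_) fun e he f hf h => ?_
  · simp only [coe_filter, simpleArcs, mem_filter, mem_univ, true_and, Set.mem_ofPred_eq] at he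
    obtain ⟨⟨hne, h1⟩, rfl⟩ := he
    simp [neighbors, Ne.symm hne, h1]
  · simp only [coe_filter, Set.mem_ofPred_eq] at he hf
    exact Prod.ext (he.2.trans hf.2.symm) h

lemma card_filter_snd_simpleArcs_le (hsymm : ∀ u v, m u v = m v u) (v : V) :
    #((simpleArcs m).filter (·.2 = v)) ≤ #(neighbors m v) := by
  refine card_le_card_of_injOn Prod.fst (fun e he => ?_) fun e he f hf h => ?_
  · simp only [coe_filter, simpleArcs, mem_filter, mem_univ, true_and, Set.mem_ofPred_eq] at he
    obtain ⟨⟨hne, h1⟩, rfl⟩ := he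
    simp [neighbors, hne, hsymm, h1]
  · simp only [coe_filter, Set.mem_ofPred_eq] at he hf
    exact Prod.ext h (he.2.trans hf.2.symm)

/-- The obstructions to `(e.1, v, f.1, e.2, f.2)` being an ℓ-switching: `Blocks m v` for
either arc and `Crosses m e f` for the pair. -/
def Blocks (v : V) (e : V × V) : Prop := e.1 = v ∨ e.2 = v ∨ e.1 ∈ neighbors m v

def Crosses (e f : V × V) : Prop :=
  f.1 = e.1 ∨ f.1 = e.2 ∨ f.2 = e.1 ∨ f.2 = e.2 ∨ f.2 ∈ neighbors m e.2

instance (v : V) : DecidablePred (Blocks m v) := fun _ => by unfold Blocks; infer_instance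

instance (e : V × V) : DecidablePred (Crosses m e) := fun _ => by unfold Crosses; infer_instance

def lSwitchings : Finset (Fin 5 → V) := univ.filter fun t => Function.Injective t ∧
  1 ≤ m (t 1) (t 1) ∧ m (t 0) (t 3) = 1 ∧ m (t 2) (t 4) = 1 ∧
  m (t 0) (t 1) = 0 ∧ m (t 1) (t 2) = 0 ∧ m (t 3) (t 4) = 0

variable {m}

lemma card_filter_blocks_le (hsymm : ∀ u v, m u v = m v u)
    {Δ : ℕ} (hΔ : ∀ v, #(neighbors m v) ≤ Δ) (v : V) :
    #((simpleArcs m).filter (Blocks m v)) ≤ 2 * Δ + Δ * Δ := by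
  have hfst := (card_filter_fst_simpleArcs_le m v).trans (hΔ v)
  have hsnd := (card_filter_snd_simpleArcs_le m hsymm v).trans (hΔ v)
  have hnbr : #((simpleArcs m).filter (·.1 ∈ neighbors m v)) ≤ Δ * Δ :=
    (card_filter_mem_le _ Prod.fst _ Δ fun u _ =>
      (card_filter_fst_simpleArcs_le m u).trans (hΔ u)).trans (Nat.mul_le_mul_right _ (hΔ v))
  unfold Blocks
  rw [filter_or, filter_or]
  grw [card_union_le, card_union_le, hfst, hsnd, hnbr]
  omega

lemma card_filter_crosses_le (hsymm : ∀ u v, m u v = m v u)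
    {Δ : ℕ} (hΔ : ∀ v, #(neighbors m v) ≤ Δ) (e : V × V) :
    #((simpleArcs m).filter (Crosses m e)) ≤ 4 * Δ + Δ * Δ := by
  have hfst u := (card_filter_fst_simpleArcs_le m u).trans (hΔ u)
  have hsnd u := (card_filter_snd_simpleArcs_le m hsymm u).trans (hΔ u)
  have hnbr : #((simpleArcs m).filter (·.2 ∈ neighbors m e.2)) ≤ Δ * Δ :=
    (card_filter_mem_le _ Prod.snd _ Δ fun u _ => hsnd u).trans
      (Nat.mul_le_mul_right _ (hΔ e.2))
  unfold Crosses
  rw [filter_or, filter_or, filter_or, filter_or]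
  grw [card_union_le, card_union_le, card_union_le, card_union_le, hfst, hfst, hsnd, hsnd, hnbr]
  omega

lemma card_filter_bad_pairs_le (hsymm : ∀ u v, m u v = m v u)
    {Δ : ℕ} (hΔ : ∀ v, #(neighbors m v) ≤ Δ) (v : V) :
    #((simpleArcs m ×ˢ simpleArcs m).filter fun x =>
      Blocks m v x.1 ∨ Blocks m v x.2 ∨ Crosses m x.1 x.2) ≤
      #(simpleArcs m) * (8 * Δ + 3 * Δ ^ 2) := by
  have hblocks := card_filter_blocks_le hsymm hΔ v
  have hcrosses := card_filter_product_le (simpleArcs m) (simpleArcs m) (Crosses m) _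
    fun e _ => card_filter_crosses_le hsymm hΔ e
  rw [filter_or, filter_or, filter_product_left, filter_product_right]
  grw [card_union_le, card_union_le, card_product, card_product, hblocks, hcrosses]
  apply le_of_eq
  ring

lemma vec_mem_lSwitchings (hsymm : ∀ u v, m u v = m v u) {v : V} {e f : V × V}
    (hv : v ∈ loopVertices m) (he : e ∈ simpleArcs m) (hf : f ∈ simpleArcs m)
    (hve : ¬Blocks m v e) (hvf : ¬Blocks m v f) (hef : ¬Crosses m e f) :
    ![e.1, v, f.1, e.2, f.2] ∈ lSwitchings m := by
  simp only [loopVertices, simpleArcs, mem_filter, mem_univ, true_and] at hv he hf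
  simp only [Blocks, Crosses, neighbors, mem_filter, mem_univ, true_and, not_or, not_and,
    not_not] at hve hvf hef
  refine mem_filter.mpr ⟨mem_univ _, ?_, ?_⟩
  · intro i j hij
    fin_cases i <;> fin_cases j <;> simp_all
  · exact ⟨Nat.one_le_iff_ne_zero.mpr hv, he.2, hf.2, hsymm e.1 v ▸ hve.2.2 hve.1,
      hvf.2.2 hvf.1, hef.2.2.2.2 hef.2.2.2.1⟩

lemma card_loopVertices_mul_sq_le (hsymm : ∀ u v, m u v = m v u)
    {Δ : ℕ} (hΔ : ∀ v, #(neighbors m v) ≤ Δ) :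
    #(loopVertices m) * (#(simpleArcs m) * #(simpleArcs m)) ≤
      #(lSwitchings m) + #(loopVertices m) * (#(simpleArcs m) * (8 * Δ + 3 * Δ ^ 2)) := by
  let Bad (x : V × (V × V) × (V × V)) : Prop :=
    Blocks m x.1 x.2.1 ∨ Blocks m x.1 x.2.2 ∨ Crosses m x.2.1 x.2.2
  let P := loopVertices m ×ˢ (simpleArcs m ×ˢ simpleArcs m)
  have hgood : #(P.filter (¬Bad ·)) ≤ #(lSwitchings m) := by
    refine card_le_card_of_injOn (fun x => ![x.2.1.1, x.1, x.2.2.1, x.2.1.2, x.2.2.2])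
      (fun x hx => ?_) ?_
    · simp only [coe_filter, mem_product, not_or, Set.mem_ofPred_eq, P, Bad] at hx
      exact vec_mem_lSwitchings hsymm hx.1.1 hx.1.2.1 hx.1.2.2 hx.2.1 hx.2.2.1 hx.2.2.2
    · exact (Function.LeftInverse.injective (g := fun t => (t 1, (t 0, t 3), (t 2, t 4)))
        fun _ => rfl).injOn
  have hbad : #(P.filter Bad) ≤ #(loopVertices m) * (#(simpleArcs m) * (8 * Δ + 3 * Δ ^ 2)) :=
    card_filter_product_le _ _ (fun v x => Bad (v, x)) _ fun v _ =>
      card_filter_bad_pairs_le hsymm hΔ v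
  rw [← card_product, ← card_product, ← card_filter_add_card_filter_not Bad, add_comm]
  exact add_le_add hgood hbad

end Multigraph

theorem fl_lower_general (n : ℕ) (d : Fin n → ℕ) (mG : Fin n → Fin n → ℕ)
    (M Δ m1 m2 : ℕ)
    (hM : M = ∑ i, d i)
    (hΔ : Δ = Finset.univ.sup d)
    (hsymm : ∀ u v, mG u v = mG v u)
    (hdeg : ∀ v, (∑ u ∈ Finset.univ.filter (fun u => u ≠ v), mG v u)
        + 2 * mG v v = d v)
    (hloop : ∀ v, mG v v ≤ 1)
    (hmul : ∀ u v, u ≠ v → mG u v ≤ 2)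
    (hm1 : m1 = ∑ v, mG v v)
    (hm2 : 2 * m2 = Set.ncard {q : Fin n × Fin n | q.1 ≠ q.2 ∧ mG q.1 q.2 = 2})
    (fl : ℕ)
    (hfl : fl = Set.ncard {t : Fin 5 → Fin n | Function.Injective t ∧
      1 ≤ mG (t 1) (t 1) ∧
      mG (t 0) (t 3) = 1 ∧ mG (t 2) (t 4) = 1 ∧
      mG (t 0) (t 1) = 0 ∧ mG (t 1) (t 2) = 0 ∧ mG (t 3) (t 4) = 0}) :
    (m1 : ℝ) * M * ((M : ℝ) - 4 * m1 - 8 * m2 - 8 * Δ - 3 * Δ ^ 2) ≤ (fl : ℝ) := by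
  have hnbr v : #(neighbors mG v) ≤ Δ :=
    (card_neighbors_le_sum mG v).trans <| (hdeg v ▸ le_self_add).trans (hΔ ▸ le_sup (mem_univ v))
  have hm1' : m1 = #(loopVertices mG) := hm1.trans (sum_diag_eq_card_loopVertices mG hloop)
  have hm2' : 2 * m2 = #(doubleArcs mG) := by
    rw [hm2, ← Set.ncard_coe_finset, doubleArcs, coe_filter]
    simp
  have hfl' : fl = #(lSwitchings mG) := by
    rw [hfl, ← Set.ncard_coe_finset, lSwitchings, coe_filter]
    simp
  have hM' : M = #(simpleArcs mG) + 2 * (2 * m2) + 2 * m1 := by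
    rw [hM, hm2', ← sum_offDiag_eq_card_simpleArcs_add_card_doubleArcs mG hmul, hm1, mul_sum,
      ← sum_add_distrib]
    exact sum_congr rfl fun v _ => (hdeg v).symm
  have hcount := card_loopVertices_mul_sq_le hsymm hnbr
  rw [← hm1', ← hfl'] at hcount
  have hcountℝ : (m1 : ℝ) * (#(simpleArcs mG) * #(simpleArcs mG)) ≤
      fl + m1 * (#(simpleArcs mG) * (8 * Δ + 3 * Δ ^ 2)) := by exact_mod_cast hcount
  have ha : (0 : ℝ) ≤ 4 * m2 + 2 * m1 := by positivity
  have hc : (0 : ℝ) ≤ 8 * Δ + 3 * Δ ^ 2 := by positivity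
  rw [hM']
  push_cast
  nlinarith [mul_nonneg (Nat.cast_nonneg (α := ℝ) m1) (mul_nonneg ha (add_nonneg ha hc))]

/-- **Unconditional lower bound on the number `f_ℓ(G)` of ℓ-switchings.**
`G ∈ 𝒢_{m1,m2}` (no restriction on `m1`, `m2`).  `f_ℓ(G)` is the number of
ordered 5-tuples `(v1,…,v5)` of distinct vertices with a loop at `v2`,
`v1v4` and `v3v5` simple edges, and `v1v2`, `v2v3`, `v4v5` non-edges.  Then
`f_ℓ(G) ≥ m1·M·(M − 4·m1 − 8·m2 − 8Δ − 3Δ²)`. -/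
theorem fl_lower (n : ℕ) (d : Fin n → ℕ) (mG : Fin n → Fin n → ℕ)
    (M M2 Δ m1 m2 : ℕ)
    (hM : M = ∑ i, d i)
    (hM2 : M2 = ∑ i, d i * (d i - 1))
    (hΔ : Δ = Finset.univ.sup d)
    (hsymm : ∀ u v, mG u v = mG v u)
    (hdeg : ∀ v, (∑ u ∈ Finset.univ.filter (fun u => u ≠ v), mG v u)
        + 2 * mG v v = d v)
    (hloop : ∀ v, mG v v ≤ 1)
    (hmul : ∀ u v, u ≠ v → mG u v ≤ 2)
    (hm1 : m1 = ∑ v, mG v v)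
    (hm2 : 2 * m2 = Set.ncard {q : Fin n × Fin n | q.1 ≠ q.2 ∧ mG q.1 q.2 = 2})
    (fl : ℕ)
    (hfl : fl = Set.ncard {t : Fin 5 → Fin n | Function.Injective t ∧
      1 ≤ mG (t 1) (t 1) ∧
      mG (t 0) (t 3) = 1 ∧ mG (t 2) (t 4) = 1 ∧
      mG (t 0) (t 1) = 0 ∧ mG (t 1) (t 2) = 0 ∧ mG (t 3) (t 4) = 0}) :
    (m1 : ℝ) * M * ((M : ℝ) - 4 * m1 - 8 * m2 - 8 * Δ - 3 * Δ ^ 2) ≤ (fl : ℝ) :=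
  fl_lower_general n d mG M Δ m1 m2 hM hΔ hsymm hdeg hloop hmul hm1 hm2 fl hfl
end

section
/- Let G be a bipartite multigraph in 𝒢_{0,m2} with m2 ≤ S_2·T_2/M². Let b_d(G,∅) denote the number of simple ordered 2-paths of G whose middle vertex lies in Y, i.e. ordered triples (u,v,w) with u,w ∈ X distinct, v ∈ Y, and uv, wv simple edges. Then T_2·(1 − 4·m2·Δ/T_2) ≤ b_d(G,∅) ≤ T_2, i.e. T_2 − 4·m2·Δ ≤ b_d(G,∅) ≤ T_2. -/
/-!
Group the simple 2-paths by their middle vertex `y`. If `y` has `a` simple and `d` double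
neighbours then `t y = a + 2d` and `y` is the middle of `a(a - 1) ≤ t y (t y - 1)` simple
2-paths; conversely `t(t - 1) - a(a - 1) ≤ 4 d t ≤ 4 d Δ`. Summing over `Y`, the `d`'s add
up to the number of double edges.
-/

open Finset

variable {X Y : Type*} [Fintype X]

def multNbrs (mG : X → Y → ℕ) (k : ℕ) (y : Y) : Finset X := {x | mG x y = k}

theorem sum_eq_card_multNbrs_one_add_two_mul (mG : X → Y → ℕ) (y : Y)
    (hmul : ∀ x, mG x y ≤ 2) :
    ∑ x, mG x y = #(multNbrs mG 1 y) + 2 * #(multNbrs mG 2 y) := by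
  simp only [multNbrs, card_filter, mul_sum, ← sum_add_distrib]
  refine sum_congr rfl fun x _ => ?_
  have := hmul x
  interval_cases mG x y <;> rfl

variable [Fintype Y]

theorem ncard_setOf_mult_eq_sum_card_multNbrs (mG : X → Y → ℕ) (k : ℕ) :
    {q : X × Y | mG q.1 q.2 = k}.ncard = ∑ y, #(multNbrs mG k y) := by
  rw [Set.ncard_eq_toFinset_card', Set.toFinset_ofPred, card_filter,
    Fintype.sum_prod_type, sum_comm]
  simp only [multNbrs, card_filter]

theorem ncard_setOf_twoPaths_eq_sum [DecidableEq X] (mG : X → Y → ℕ) (k : ℕ) :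
    {tr : X × Y × X | tr.1 ≠ tr.2.2 ∧ mG tr.1 tr.2.1 = k ∧ mG tr.2.2 tr.2.1 = k}.ncard =
      ∑ y, #(multNbrs mG k y) * (#(multNbrs mG k y) - 1) := by
  rw [Set.ncard_eq_toFinset_card', Set.toFinset_ofPred, card_filter]
  simp only [Fintype.sum_prod_type]
  rw [sum_comm]
  refine sum_congr rfl fun y _ => ?_
  have hoffDiag : (multNbrs mG k y).offDiag =
      ({p : X × X | p.1 ≠ p.2 ∧ mG p.1 y = k ∧ mG p.2 y = k} : Finset _) := by
    ext
    simp only [mem_offDiag, multNbrs, mem_filter, mem_univ, true_and]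
    tauto
  rw [Nat.mul_sub_one, ← offDiag_card, hoffDiag, card_filter, Fintype.sum_prod_type]

theorem mul_pred_le_mul_pred_add (a d : ℕ) :
    (a + 2 * d) * (a + 2 * d - 1) ≤ a * (a - 1) + 4 * d * (a + 2 * d) := by
  rcases a with _ | a
  · simp only [zero_add, Nat.zero_sub, mul_zero]
    nlinarith [Nat.sub_le (2 * d) 1]
  · rw [Nat.add_sub_cancel, show a + 1 + 2 * d - 1 = a + 2 * d by omega]
    nlinarith

theorem bipartite_bd_empty_bounds_general (m n : ℕ)
    (s : Fin m → ℕ) (t : Fin n → ℕ) (mG : Fin m → Fin n → ℕ)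
    (T2 Δ m2 : ℕ)
    (ht : ∀ y, ∑ x, mG x y = t y)
    (hT2 : T2 = ∑ y, t y * (t y - 1))
    (hΔ : Δ = max (Finset.univ.sup s) (Finset.univ.sup t))
    (hmul : ∀ x y, mG x y ≤ 2)
    (hm2 : m2 = Set.ncard {q : Fin m × Fin n | mG q.1 q.2 = 2})
    (bd0 : ℕ)
    (hbd0 : bd0 = Set.ncard {tr : Fin m × Fin n × Fin m |
      tr.1 ≠ tr.2.2 ∧ mG tr.1 tr.2.1 = 1 ∧ mG tr.2.2 tr.2.1 = 1}) :
    (T2 : ℝ) - 4 * m2 * Δ ≤ (bd0 : ℝ) ∧ bd0 ≤ T2 := by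
  rw [ncard_setOf_mult_eq_sum_card_multNbrs] at hm2
  rw [ncard_setOf_twoPaths_eq_sum] at hbd0
  have ht' : ∀ y, t y = #(multNbrs mG 1 y) + 2 * #(multNbrs mG 2 y) := fun y =>
    (ht y).symm.trans (sum_eq_card_multNbrs_one_add_two_mul mG y (hmul · y))
  have htΔ : ∀ y, t y ≤ Δ := fun y => hΔ ▸ le_max_of_le_right (le_sup (mem_univ y))
  have hupper : bd0 ≤ T2 := by
    rw [hbd0, hT2]
    gcongr with y
    all_goals rw [ht']; omega
  have hlower : T2 ≤ bd0 + 4 * m2 * Δ := by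
    rw [hbd0, hT2, hm2, mul_sum, sum_mul, ← sum_add_distrib]
    gcongr with y
    calc t y * (t y - 1)
        ≤ #(multNbrs mG 1 y) * (#(multNbrs mG 1 y) - 1) + 4 * #(multNbrs mG 2 y) * t y := by
          rw [ht']; exact mul_pred_le_mul_pred_add _ _
      _ ≤ #(multNbrs mG 1 y) * (#(multNbrs mG 1 y) - 1) + 4 * #(multNbrs mG 2 y) * Δ := by
          gcongr; exact htΔ y
  refine ⟨?_, hupper⟩
  rw [sub_le_iff_le_add]
  exact_mod_cast hlower

/-- **Bipartite bounds on `b_d(G, ∅)`.**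
`G` is a bipartite multigraph with parts `X = Fin m` (degrees `s`) and
`Y = Fin n` (degrees `t`), multiplicity function `mG`, exactly `m2` double
edges and no edge of multiplicity `≥ 3`, with `m2 ≤ S₂·T₂/M²`.  `b_d(G,∅)` is
the number of simple ordered 2-paths `(u,v,w)` with `u, w ∈ X` distinct,
`v ∈ Y`, and `uv`, `wv` simple edges.  Then
`T₂ − 4·m2·Δ ≤ b_d(G,∅) ≤ T₂`. -/
theorem bipartite_bd_empty_bounds (m n : ℕ)
    (s : Fin m → ℕ) (t : Fin n → ℕ) (mG : Fin m → Fin n → ℕ)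
    (M S2 T2 Δ m2 : ℕ)
    (hs : ∀ x, ∑ y, mG x y = s x)
    (ht : ∀ y, ∑ x, mG x y = t y)
    (hM : M = ∑ x, s x)
    (hMt : M = ∑ y, t y)
    (hS2 : S2 = ∑ x, s x * (s x - 1))
    (hT2 : T2 = ∑ y, t y * (t y - 1))
    (hΔ : Δ = max (Finset.univ.sup s) (Finset.univ.sup t))
    (hmul : ∀ x y, mG x y ≤ 2)
    (hm2 : m2 = Set.ncard {q : Fin m × Fin n | mG q.1 q.2 = 2})
    (hm2le : (m2 : ℝ) ≤ (S2 : ℝ) * T2 / (M : ℝ) ^ 2)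
    (bd0 : ℕ)
    (hbd0 : bd0 = Set.ncard {tr : Fin m × Fin n × Fin m |
      tr.1 ≠ tr.2.2 ∧ mG tr.1 tr.2.1 = 1 ∧ mG tr.2.2 tr.2.1 = 1}) :
    (T2 : ℝ) - 4 * m2 * Δ ≤ (bd0 : ℝ) ∧ bd0 ≤ T2 :=
  bipartite_bd_empty_bounds_general m n s t mG T2 Δ m2 ht hT2 hΔ hmul hm2 bd0 hbd0
end
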